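/- arXiv:1305.4071 — 6 statements merged into one kernel-verified Lean document; each statement's English description precedes it below -/
import Mathlib

section
/- Let (λ_{d,i})_{d≥1, i≥1} be a family of nonnegative reals such that for each d the sequence (λ_{d,i})_i is non-increasing in i, and define n(ε,d) = #{ i ≥ 1 : λ_{d,i} > ε² } ∈ ℕ ∪ {∞}. (a) If there exist constants C, p > 0 and q ≥ 0 such that n(ε,d) ≤ C·ε^{−p}·d^q for all d ≥ 1 and ε ∈ (0,1], then for every τ > p/2 one has sup_{d≥1} d^{−2q/p} ( Σ_{i = ⌈(1+C)d^q⌉}^{∞} λ_{d,i}^τ )^{1/τ} ≤ C^{2/p} · ζ(2τ/p)^{1/τ}, where ζ is the Riemann zeta function. (b) Conversely, suppose for some r ≥ 0, τ > 0 and constants C > 0, p, q ≥ 0, setting f(d) = ⌈ C·(min(√λ_{d,1}, 1))^{−p}·d^q ⌉, the quantity C_τ := sup_{d≥1} d^{−r} ( Σ_{i = f(d)}^{∞} λ_{d,i}^τ )^{1/τ} is finite. Then n(ε,d) ≤ (C + C_τ^τ)·ε^{−max(p,2τ)}·d^{max(q,rτ)} for every ε ∈ (0,1] and every d ≥ 1.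 -/
/-!
For (a), if `n(ε) ≤ B ε^{-p}` (with `B = C d^q`) then every index `i > B` satisfies
`λ_i ≤ (B / i)^{2/p}`: otherwise some `ε ≤ 1` with `ε² < λ_i` would make the first `i`
eigenvalues exceed `ε²`, forcing `i ≤ B ε^{-p} < i`. Summing `λ_i^τ ≤ B^{2τ/p} i^{-2τ/p}` over
the tail gives the zeta bound.

For (b), the eigenvalues above `ε²` split into fewer than `f(d)` indices below the cutoff and, by
Markov's inequality, at most `ε^{-2τ} Σ_{i ≥ f(d)} λ_i^τ` indices beyond it; when `ε² ≥ λ_1` there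
are none, and otherwise `ε ≤ min(√λ_1, 1)`, which bounds `f(d)` by `C ε^{-p} d^q + 1`.
-/

open scoped ENNReal

/-- `zeta' z = ∑_{n=1}^∞ n^{-z}`, the Riemann zeta function for real `z > 1`. -/
noncomputable def zeta' (z : ℝ) : ℝ := ∑' n : ℕ, ((n : ℝ) + 1) ^ (-z)

open Set

theorem summable_zeta'_terms {s : ℝ} (hs : 1 < s) :
    Summable fun n : ℕ => ((n : ℝ) + 1) ^ (-s) := by
  have h := (summable_nat_add_iff 1).mpr (Real.summable_nat_rpow.mpr (neg_lt_neg hs))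
  exact h.congr fun n => by push_cast; rfl

theorem zeta'_nonneg (s : ℝ) : 0 ≤ zeta' s :=
  tsum_nonneg fun n => by positivity

theorem tsum_subtype_rpow_neg_le_zeta' {s : ℝ} (hs : 1 < s) {m : ℕ} (hm : 1 ≤ m) :
    ∑' i : {i : ℕ // m ≤ i}, ENNReal.ofReal ((i : ℝ) ^ (-s)) ≤ ENNReal.ofReal (zeta' s) := by
  have hinj : Function.Injective fun i : {i : ℕ // m ≤ i} => i.1 - 1 :=
    fun a b h => Subtype.ext (by have := a.2; have := b.2; simp only at h; omega)
  calc ∑' i : {i : ℕ // m ≤ i}, ENNReal.ofReal ((i : ℝ) ^ (-s))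
      = ∑' i : {i : ℕ // m ≤ i}, ENNReal.ofReal ((((i.1 - 1 : ℕ) : ℝ) + 1) ^ (-s)) :=
        tsum_congr fun i => by rw [Nat.cast_sub (hm.trans i.2), Nat.cast_one, sub_add_cancel]
    _ ≤ ∑' n : ℕ, ENNReal.ofReal (((n : ℝ) + 1) ^ (-s)) :=
        ENNReal.tsum_comp_le_tsum_of_injective hinj _
    _ = ENNReal.ofReal (zeta' s) :=
        (ENNReal.ofReal_tsum_of_nonneg (fun n => by positivity) (summable_zeta'_terms hs)).symm

theorem natCast_ceil_sub_one_le {x : ℝ} (hx : 0 ≤ x) : ((⌈x⌉₊ - 1 : ℕ) : ℝ) ≤ x := by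
  rcases Nat.eq_zero_or_pos ⌈x⌉₊ with h | h
  · simp [h, hx]
  · rw [Nat.cast_sub h, Nat.cast_one]
    linarith [Nat.ceil_lt_add_one hx]

noncomputable def informationComplexity (lam : ℕ → ℝ) (ε : ℝ) : ℕ∞ :=
  {i : ℕ | 1 ≤ i ∧ ε ^ 2 < lam i}.encard

section informationComplexity

variable {f : ℕ → ℝ} {ε : ℝ}

theorem le_informationComplexity (hf : AntitoneOn f (Ici 1)) {i : ℕ} (hi : 1 ≤ i)
    (h : ε ^ 2 < f i) : (i : ℕ∞) ≤ informationComplexity f ε :=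
  calc (i : ℕ∞) = (Icc 1 i).encard := by
        rw [← Finset.coe_Icc, encard_coe_eq_coe_finsetCard, Nat.card_Icc, Nat.add_sub_cancel]
    _ ≤ informationComplexity f ε :=
        encard_le_encard fun j hj => ⟨hj.1, h.trans_le (hf hj.1 hi hj.2)⟩

theorem informationComplexity_eq_zero (hf : AntitoneOn f (Ici 1)) (h : f 1 ≤ ε ^ 2) :
    informationComplexity f ε = 0 := by
  rw [informationComplexity, encard_eq_zero, eq_empty_iff_forall_notMem]
  rintro i ⟨hi, hlt⟩
  exact (hlt.trans_le ((hf self_mem_Ici hi hi).trans h)).false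

theorem apply_le_of_informationComplexity_le (hf : AntitoneOn f (Ici 1)) {B p : ℝ} (hB : 0 < B)
    (hp : 0 < p)
    (hn : ∀ ε : ℝ, 0 < ε → ε ≤ 1 →
      (informationComplexity f ε : ℝ≥0∞) ≤ ENNReal.ofReal (B * ε ^ (-p)))
    {i : ℕ} (hi : B < i) : f i ≤ (B / i) ^ (2 / p) := by
  have hi0 : (0 : ℝ) < i := hB.trans hi
  set t := (B / i) ^ (1 / p) with ht
  have ht0 : 0 < t := by positivity
  have ht1 : t < 1 := Real.rpow_lt_one (by positivity) ((div_lt_one hi0).2 hi) (by positivity)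
  have ht2 : t ^ 2 = (B / i) ^ (2 / p) := by
    rw [← Real.rpow_natCast, ← Real.rpow_mul (by positivity)]
    ring_nf
  by_contra! h
  obtain ⟨ε, htε, hε⟩ := exists_between (lt_min ((Real.lt_sqrt ht0.le).2 (ht2 ▸ h)) ht1)
  have hε0 : 0 < ε := ht0.trans htε
  have hcount : (i : ℝ) ≤ B * ε ^ (-p) := by
    have hεi : ε ^ 2 < f i := (Real.lt_sqrt hε0.le).1 (hε.trans_le (min_le_left _ _))
    have h := (ENat.toENNReal_le.2 (le_informationComplexity hf (Nat.cast_pos.1 hi0) hεi)).trans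
      (hn ε hε0 (hε.le.trans (min_le_right _ _)))
    rwa [ENat.toENNReal_coe, ← ENNReal.ofReal_natCast,
      ENNReal.ofReal_le_ofReal_iff (by positivity)] at h
  have hlt : B * ε ^ (-p) < i :=
    calc B * ε ^ (-p) < B * t ^ (-p) :=
          mul_lt_mul_of_pos_left (Real.rpow_lt_rpow_of_neg ht0 htε (neg_lt_zero.2 hp)) hB
      _ = i := by
          rw [ht, ← Real.rpow_mul (by positivity), show 1 / p * -p = -1 by field_simp,
            Real.rpow_neg_one, inv_div]
          field_simp
  linarith

theorem tsum_rpow_le_of_informationComplexity_le (hf : AntitoneOn f (Ici 1)) {B p : ℝ}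
    (hB : 0 < B) (hp : 0 < p)
    (hn : ∀ ε : ℝ, 0 < ε → ε ≤ 1 →
      (informationComplexity f ε : ℝ≥0∞) ≤ ENNReal.ofReal (B * ε ^ (-p)))
    {τ : ℝ} (hτ : p / 2 < τ) {m : ℕ} (hm : B < m) :
    (∑' i : {i : ℕ // m ≤ i}, ENNReal.ofReal (f i) ^ τ) ^ (1 / τ) ≤
      ENNReal.ofReal (B ^ (2 / p) * zeta' (2 * τ / p) ^ (1 / τ)) := by
  have hτ0 : 0 < τ := (half_pos hp).trans hτ
  have hs : 1 < 2 * τ / p := by rw [lt_div_iff₀ hp]; linarith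
  have hterm : ∀ i : {i : ℕ // m ≤ i}, ENNReal.ofReal (f i) ^ τ ≤
      ENNReal.ofReal (B ^ (2 * τ / p)) * ENNReal.ofReal ((i : ℝ) ^ (-(2 * τ / p))) := by
    rintro ⟨i, hi⟩
    have hBi : B < i := hm.trans_le (Nat.cast_le.2 hi)
    have hi0 : (0 : ℝ) < i := hB.trans hBi
    calc ENNReal.ofReal (f i) ^ τ ≤ ENNReal.ofReal ((B / i) ^ (2 / p)) ^ τ := by
          gcongr
          exact apply_le_of_informationComplexity_le hf hB hp hn hBi
      _ = ENNReal.ofReal (B ^ (2 * τ / p) * (i : ℝ) ^ (-(2 * τ / p))) := by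
          rw [ENNReal.ofReal_rpow_of_nonneg (by positivity) hτ0.le,
            ← Real.rpow_mul (by positivity), Real.div_rpow hB.le hi0.le, Real.rpow_neg hi0.le,
            div_mul_eq_mul_div, div_eq_mul_inv]
      _ = _ := ENNReal.ofReal_mul (by positivity)
  have htail : ∑' i : {i : ℕ // m ≤ i}, ENNReal.ofReal (f i) ^ τ ≤
      ENNReal.ofReal (B ^ (2 * τ / p)) * ENNReal.ofReal (zeta' (2 * τ / p)) := by
    refine (ENNReal.tsum_le_tsum hterm).trans ?_
    rw [ENNReal.tsum_mul_left]
    gcongr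
    exact tsum_subtype_rpow_neg_le_zeta' hs (Nat.cast_pos.1 (hB.trans hm))
  calc _ ≤ (ENNReal.ofReal (B ^ (2 * τ / p)) * ENNReal.ofReal (zeta' (2 * τ / p))) ^ (1 / τ) :=
        by gcongr
    _ = _ := by
        rw [← ENNReal.ofReal_mul (by positivity),
          ENNReal.ofReal_rpow_of_nonneg (mul_nonneg (by positivity) (zeta'_nonneg _))
            (one_div_pos.2 hτ0).le,
          Real.mul_rpow (by positivity) (zeta'_nonneg _), ← Real.rpow_mul hB.le]
        congr 3
        field_simp

theorem informationComplexity_le_add_tsum_div {τ : ℝ} (hε : 0 < ε) (hτ : 0 ≤ τ)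
    (m : ℕ) :
    (informationComplexity f ε : ℝ≥0∞) ≤ ((m - 1 : ℕ) : ℝ≥0∞) +
      (∑' i : {i : ℕ // m ≤ i}, ENNReal.ofReal (f i) ^ τ) / ENNReal.ofReal (ε ^ 2) ^ τ := by
  set T := {i : ℕ | m ≤ i ∧ ε ^ 2 < f i}
  have hpos : 0 < ENNReal.ofReal (ε ^ 2) := ENNReal.ofReal_pos.2 (by positivity)
  have hmarkov : (T.encard : ℝ≥0∞) * ENNReal.ofReal (ε ^ 2) ^ τ ≤
      ∑' i : {i : ℕ // m ≤ i}, ENNReal.ofReal (f i) ^ τ :=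
    calc (T.encard : ℝ≥0∞) * ENNReal.ofReal (ε ^ 2) ^ τ
        = ∑' _ : T, ENNReal.ofReal (ε ^ 2) ^ τ := (ENNReal.tsum_set_const T _).symm
      _ ≤ ∑' i : T, ENNReal.ofReal (f i) ^ τ :=
          ENNReal.tsum_le_tsum fun i => by gcongr; exact i.2.2.le
      _ ≤ _ := ENNReal.tsum_mono_subtype (fun i => ENNReal.ofReal (f i) ^ τ) fun _ hi => hi.1
  have hsplit : {i : ℕ | 1 ≤ i ∧ ε ^ 2 < f i} ⊆ (Finset.Ico 1 m : Set ℕ) ∪ T := by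
    rintro i ⟨hi, hlt⟩
    rcases lt_or_ge i m with h | h
    · exact Or.inl (Finset.coe_Ico 1 m ▸ ⟨hi, h⟩)
    · exact Or.inr ⟨h, hlt⟩
  calc (informationComplexity f ε : ℝ≥0∞)
      ≤ (((Finset.Ico 1 m : Set ℕ).encard + T.encard : ℕ∞) : ℝ≥0∞) :=
        ENat.toENNReal_le.2 ((encard_le_encard hsplit).trans (encard_union_le _ _))
    _ ≤ _ := by
        rw [ENat.toENNReal_add, encard_coe_eq_coe_finsetCard, Nat.card_Ico, ENat.toENNReal_coe]
        gcongr
        exact (ENNReal.le_div_iff_mul_le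
          (Or.inl (ENNReal.rpow_pos hpos ENNReal.ofReal_ne_top).ne')
          (Or.inl (ENNReal.rpow_ne_top_of_nonneg hτ ENNReal.ofReal_ne_top))).2 hmarkov

theorem informationComplexity_le_of_tsum_le (hf : AntitoneOn f (Ici 1)) {B A τ p : ℝ}
    (hB : 0 ≤ B) (hA : 0 ≤ A) (hτ : 0 < τ) (hp : 0 ≤ p)
    (htail : (∑' i : {i : ℕ // ⌈B * (min √(f 1) 1) ^ (-p)⌉₊ ≤ i},
      ENNReal.ofReal (f i) ^ τ) ^ (1 / τ) ≤ ENNReal.ofReal A)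
    (hε0 : 0 < ε) (hε1 : ε ≤ 1) :
    (informationComplexity f ε : ℝ≥0∞) ≤
      ENNReal.ofReal (B * ε ^ (-p) + A ^ τ * ε ^ (-(2 * τ))) := by
  rcases le_or_gt (f 1) (ε ^ 2) with hsmall | hlarge
  · simp [informationComplexity_eq_zero hf hsmall]
  have hεμ : ε ≤ min √(f 1) 1 := le_min ((Real.lt_sqrt hε0.le).2 hlarge).le hε1
  have hhead : (((⌈B * (min √(f 1) 1) ^ (-p)⌉₊ - 1 : ℕ) : ℝ)) ≤ B * ε ^ (-p) :=
    calc (((⌈B * (min √(f 1) 1) ^ (-p)⌉₊ - 1 : ℕ) : ℝ)) ≤ B * (min √(f 1) 1) ^ (-p) :=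
          natCast_ceil_sub_one_le (by positivity)
      _ ≤ B * ε ^ (-p) :=
          mul_le_mul_of_nonneg_left (Real.rpow_le_rpow_of_nonpos hε0 hεμ (neg_nonpos.2 hp)) hB
  rw [one_div, ENNReal.rpow_inv_le_iff hτ, ENNReal.ofReal_rpow_of_nonneg hA hτ.le] at htail
  calc (informationComplexity f ε : ℝ≥0∞)
      ≤ _ := informationComplexity_le_add_tsum_div hε0 hτ.le _
    _ ≤ ENNReal.ofReal (B * ε ^ (-p)) + ENNReal.ofReal (A ^ τ) / ENNReal.ofReal ((ε ^ 2) ^ τ) :=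
        by
        rw [ENNReal.ofReal_rpow_of_nonneg (by positivity) hτ.le, ← ENNReal.ofReal_natCast]
        gcongr
    _ = _ := by
        rw [← ENNReal.ofReal_div_of_pos (by positivity),
          ← ENNReal.ofReal_add (by positivity) (by positivity), div_eq_mul_inv,
          ← Real.rpow_natCast, ← Real.rpow_mul hε0.le, ← Real.rpow_neg hε0.le]
        norm_num [mul_comm]

end informationComplexity

theorem mul_rpow_neg_mul_rpow_le_max {a ε d p p' q q' : ℝ} (ha : 0 ≤ a)
    (hε0 : 0 < ε) (hε1 : ε ≤ 1) (hd : 1 ≤ d) :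
    a * ε ^ (-p) * d ^ q ≤ a * ε ^ (-max p p') * d ^ max q q' := by
  have hε : ε ^ (-p) ≤ ε ^ (-max p p') :=
    Real.rpow_le_rpow_of_exponent_ge hε0 hε1 (neg_le_neg (le_max_left p p'))
  have hd : d ^ q ≤ d ^ max q q' := Real.rpow_le_rpow_of_exponent_le hd (le_max_left q q')
  exact mul_le_mul (mul_le_mul_of_nonneg_left hε ha) hd (by positivity) (by positivity)

theorem stmt4_general (lam : ℕ → ℕ → ℝ)
    (hmono : ∀ d, 1 ≤ d → ∀ i j : ℕ, 1 ≤ i → i ≤ j → lam d j ≤ lam d i) :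
    (∀ C p q : ℝ, 0 < C → 0 < p → 0 ≤ q →
      (∀ d : ℕ, 1 ≤ d → ∀ ε : ℝ, 0 < ε → ε ≤ 1 →
        ({i : ℕ | 1 ≤ i ∧ ε ^ 2 < lam d i}.encard : ℝ≥0∞) ≤
          ENNReal.ofReal (C * ε ^ (-p) * (d : ℝ) ^ q)) →
      ∀ τ : ℝ, p / 2 < τ → ∀ d : ℕ, 1 ≤ d →
        (∑' i : {i : ℕ // ⌈(1 + C) * (d : ℝ) ^ q⌉₊ ≤ i},
            ENNReal.ofReal (lam d i) ^ τ) ^ (1 / τ) ≤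
          ENNReal.ofReal (C ^ (2 / p) * zeta' (2 * τ / p) ^ (1 / τ) * (d : ℝ) ^ (2 * q / p)))
    ∧
    (∀ r τ C p q Cτ : ℝ, 0 ≤ r → 0 < τ → 0 < C → 0 ≤ p → 0 ≤ q → 0 ≤ Cτ →
      (∀ d : ℕ, 1 ≤ d →
        (∑' i : {i : ℕ //
            ⌈C * (min (Real.sqrt (lam d 1)) 1) ^ (-p) * (d : ℝ) ^ q⌉₊ ≤ i},
            ENNReal.ofReal (lam d i) ^ τ) ^ (1 / τ) ≤
          ENNReal.ofReal (Cτ * (d : ℝ) ^ r)) →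
      ∀ d : ℕ, 1 ≤ d → ∀ ε : ℝ, 0 < ε → ε ≤ 1 →
        ({i : ℕ | 1 ≤ i ∧ ε ^ 2 < lam d i}.encard : ℝ≥0∞) ≤
          ENNReal.ofReal ((C + Cτ ^ τ) * ε ^ (-max p (2 * τ)) * (d : ℝ) ^ max q (r * τ))) := by
  have hanti : ∀ d, 1 ≤ d → AntitoneOn (lam d) (Ici 1) :=
    fun d hd i hi j _ hij => hmono d hd i j hi hij
  constructor
  · intro C p q hC hp _ hbd τ hτ d hd
    have hdq : (0 : ℝ) < (d : ℝ) ^ q := by positivity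
    have hm : C * (d : ℝ) ^ q < ⌈(1 + C) * (d : ℝ) ^ q⌉₊ :=
      (by linarith : C * (d : ℝ) ^ q < (1 + C) * (d : ℝ) ^ q).trans_le (Nat.le_ceil _)
    refine (tsum_rpow_le_of_informationComplexity_le (hanti d hd) (by positivity) hp
      (fun ε hε0 hε1 => ?_) hτ hm).trans_eq ?_
    · rw [mul_right_comm]
      exact hbd d hd ε hε0 hε1
    · rw [Real.mul_rpow hC.le hdq.le, ← Real.rpow_mul (Nat.cast_nonneg d)]
      ring_nf
  · intro r τ C p q Cτ _ hτ hC hp _ hCτ hbd d hd ε hε0 hε1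
    have hd1 : (1 : ℝ) ≤ d := Nat.one_le_cast.2 hd
    refine (informationComplexity_le_of_tsum_le (hanti d hd) (B := C * (d : ℝ) ^ q)
      (A := Cτ * (d : ℝ) ^ r) (by positivity) (by positivity) hτ hp ?_ hε0 hε1).trans
      (ENNReal.ofReal_le_ofReal ?_)
    · rw [mul_right_comm]
      exact hbd d hd
    · rw [Real.mul_rpow hCτ (by positivity), ← Real.rpow_mul (Nat.cast_nonneg d)]
      have h₁ := mul_rpow_neg_mul_rpow_le_max (p := p) (p' := 2 * τ) (q := q) (q' := r * τ)
        hC.le hε0 hε1 hd1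
      have h₂ := mul_rpow_neg_mul_rpow_le_max (p := 2 * τ) (p' := p) (q := r * τ) (q' := q)
        (Real.rpow_nonneg hCτ τ) hε0 hε1 hd1
      rw [max_comm (2 * τ), max_comm (r * τ)] at h₂
      linarith

/-- **Paper Theorem 2.6** (characterization of (strong) polynomial tractability via the
absolute error criterion): `lam d i` are the non-increasingly ordered squared singular
values; the information complexity is `n(ε,d) = #{i ≥ 1 : lam d i > ε²}`.
(a) Polynomial tractability with constants `C, p, q` implies, for every `τ > p/2`,
`(∑_{i ≥ ⌈(1+C) d^q⌉} (lam d i)^τ)^{1/τ} ≤ C^{2/p} ζ(2τ/p)^{1/τ} · d^{2q/p}`.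
(b) Conversely, a bound `(∑_{i ≥ f(d)} (lam d i)^τ)^{1/τ} ≤ Cτ · d^r` with
`f(d) = ⌈C (min (√(lam d 1)) 1)^{-p} d^q⌉` yields
`n(ε,d) ≤ (C + Cτ^τ) ε^{-max(p,2τ)} d^{max(q,rτ)}`. -/
theorem stmt4 (lam : ℕ → ℕ → ℝ)
    (hnn : ∀ d i, 0 ≤ lam d i)
    (hmono : ∀ d, 1 ≤ d → ∀ i j : ℕ, 1 ≤ i → i ≤ j → lam d j ≤ lam d i) :
    (∀ C p q : ℝ, 0 < C → 0 < p → 0 ≤ q →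
      (∀ d : ℕ, 1 ≤ d → ∀ ε : ℝ, 0 < ε → ε ≤ 1 →
        ({i : ℕ | 1 ≤ i ∧ ε ^ 2 < lam d i}.encard : ℝ≥0∞) ≤
          ENNReal.ofReal (C * ε ^ (-p) * (d : ℝ) ^ q)) →
      ∀ τ : ℝ, p / 2 < τ → ∀ d : ℕ, 1 ≤ d →
        (∑' i : {i : ℕ // ⌈(1 + C) * (d : ℝ) ^ q⌉₊ ≤ i},
            ENNReal.ofReal (lam d i) ^ τ) ^ (1 / τ) ≤
          ENNReal.ofReal (C ^ (2 / p) * zeta' (2 * τ / p) ^ (1 / τ) * (d : ℝ) ^ (2 * q / p)))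
    ∧
    (∀ r τ C p q Cτ : ℝ, 0 ≤ r → 0 < τ → 0 < C → 0 ≤ p → 0 ≤ q → 0 ≤ Cτ →
      (∀ d : ℕ, 1 ≤ d →
        (∑' i : {i : ℕ //
            ⌈C * (min (Real.sqrt (lam d 1)) 1) ^ (-p) * (d : ℝ) ^ q⌉₊ ≤ i},
            ENNReal.ofReal (lam d i) ^ τ) ^ (1 / τ) ≤
          ENNReal.ofReal (Cτ * (d : ℝ) ^ r)) →
      ∀ d : ℕ, 1 ≤ d → ∀ ε : ℝ, 0 < ε → ε ≤ 1 →
        ({i : ℕ | 1 ≤ i ∧ ε ^ 2 < lam d i}.encard : ℝ≥0∞) ≤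
          ENNReal.ofReal ((C + Cτ ^ τ) * ε ^ (-max p (2 * τ)) * (d : ℝ) ^ max q (r * τ))) :=
  stmt4_general lam hmono
end

section
/- Let λ = (λ_m)_{m≥1} be a non-increasing sequence of nonnegative reals with λ₂ > 0 and let s = (s_d)_{d≥1} be a sequence of positive reals. Then the following four assertions are equivalent: (I) the scaled tensor product problem is strongly polynomially tractable, i.e. there exist C, p > 0 such that n(ε,d) ≤ C·ε^{−p} for all d ≥ 1 and ε ∈ (0,1]; (II) it is polynomially tractable, i.e. there exist C, p > 0, q ≥ 0 such that n(ε,d) ≤ C·ε^{−p}·d^q for all d ≥ 1 and ε ∈ (0,1]; (III) there exists τ ∈ (0,∞) with Σ_{m=1}^∞ λ_m^τ < ∞ and sup_{d≥1} s_d·(Σ_{m=1}^∞ λ_m^τ)^{d/τ} < ∞; (IV) there exists ρ ∈ (0,∞) with Σ_{m=1}^∞ λ_m^ρ < ∞ and limsup_{d→∞} s_d^{1/d} < 1/λ₁. Moreover, if these hold then the exponent of strong polynomial tractability p* := inf{ p > 0 : ∃ C > 0 ∀ d ≥ 1 ∀ ε ∈ (0,1], n(ε,d) ≤ C·ε^{−p}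 } equals inf{ 2τ : τ satisfies the condition in (III) }. -/
open scoped ENNReal
open Filter

/-- Worst case information complexity (absolute error criterion) of the scaled tensor
product problem with univariate squared singular values `lam` and scaling factors `s`:
`n(ε,d) = #{ j ∈ (ℕ_{≥1})^d : s_d · lam j₁ ⋯ lam j_d > ε² }`. -/
noncomputable def nScaled (lam : ℕ → ℝ) (s : ℕ → ℝ) (ε : ℝ) (d : ℕ) : ℕ∞ :=
  ({j : Fin d → ℕ | (∀ k, 1 ≤ j k) ∧ ε ^ 2 < s d * ∏ k, lam (j k)}).encard

/-- Strong polynomial tractability of the scaled problem. -/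
def SPTScaled (lam : ℕ → ℝ) (s : ℕ → ℝ) : Prop :=
  ∃ C > (0 : ℝ), ∃ p > (0 : ℝ), ∀ d : ℕ, 1 ≤ d → ∀ ε : ℝ, 0 < ε → ε ≤ 1 →
    (nScaled lam s ε d : ℝ≥0∞) ≤ ENNReal.ofReal (C * ε ^ (-p))

/-- Polynomial tractability of the scaled problem. -/
def PTScaled (lam : ℕ → ℝ) (s : ℕ → ℝ) : Prop :=
  ∃ C > (0 : ℝ), ∃ p > (0 : ℝ), ∃ q : ℝ, 0 ≤ q ∧
    ∀ d : ℕ, 1 ≤ d → ∀ ε : ℝ, 0 < ε → ε ≤ 1 →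
      (nScaled lam s ε d : ℝ≥0∞) ≤ ENNReal.ofReal (C * ε ^ (-p) * (d : ℝ) ^ q)

/-- Condition (III): `λ ∈ ℓ_τ` and `sup_d s_d ‖λ | ℓ_τ‖^d < ∞`
(note `‖λ|ℓ_τ‖^d = (∑_m λ_m^τ)^{d/τ}`). -/
def CondIII (lam : ℕ → ℝ) (s : ℕ → ℝ) (τ : ℝ) : Prop :=
  0 < τ ∧ Summable (fun m : ℕ => lam (m + 1) ^ τ) ∧
    ∃ B : ℝ, ∀ d : ℕ, 1 ≤ d → s d * (∑' m : ℕ, lam (m + 1) ^ τ) ^ ((d : ℝ) / τ) ≤ B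

/-!
Markov's inequality gives (III) ⇒ (I) with exponent `2τ`: every index counted by `n(ε,d)` has
`(s_d λ_{j₁}⋯λ_{j_d})^τ > ε^{2τ}`, and these `τ`-th powers sum to `s_d^τ (∑ λ_m^τ)^d`.

Conversely, `n(ε,d) ≤ K ε^{-p}` says that the products `s_d λ_{j₁}⋯λ_{j_d}` lie in weak
`ℓ_{p/2}` (the `k`-th largest one below `1` is at most `(K/k)^{2/p}`), hence in `ℓ_τ` for every
`τ > p/2`: `s_d^τ (∑ λ_m^τ)^d ≤ K (s_d λ₁^d)^τ + C(K)`. The left side is `(s_d λ₁^d)^τ β^d` with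
`β = ∑ λ_m^τ / λ₁^τ > 1` (as `λ₂ > 0`), so the first term is absorbed once `β^d ≥ 2K`. For
constant `K` this bounds `s_d^τ (∑ λ_m^τ)^d`, which is (III) for every `τ > p/2` and yields the
exponent; for polynomial `K = C d^q` it forces `s_d λ₁^d` to decay geometrically, which is (IV).

Finally (IV) ⇒ (III) by enlarging `τ`: `∑ λ_m^τ / λ₁^τ` does not increase with `τ`, while the
geometric rate `θ < 1` of `s_d λ₁^d` contributes `θ^{-τ} → ∞`.
-/

open Finset Asymptotics

section WeakType

variable {ι : Type*} {a : ι → ℝ} {K q τ : ℝ}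

lemma rpow_le_div_rpow_of_forall_lt {b : ℝ} {n : ℕ} (hn : 0 < n) (hb : 0 ≤ b) (hK : 0 ≤ K)
    (hq : 0 < q) (hτ : 0 ≤ τ) (h : ∀ y, 0 < y → y < b → (n : ℝ) ≤ K * y ^ (-q)) :
    b ^ τ ≤ (K / n) ^ (τ / q) := by
  have hb_le : b ≤ (K / n) ^ q⁻¹ := by
    refine le_of_forall_lt_imp_le_of_dense fun y hy => ?_
    rcases le_or_gt y 0 with hy0 | hy0
    · exact hy0.trans (by positivity)
    have hyq : 0 < y ^ q := Real.rpow_pos_of_pos hy0 q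
    rw [Real.le_rpow_inv_iff_of_pos hy0.le (by positivity) hq, le_div_iff₀ (by positivity),
      mul_comm, ← le_div_iff₀ hyq, div_eq_mul_inv, ← Real.rpow_neg hy0.le]
    exact h y hy0 hy
  calc b ^ τ ≤ ((K / n) ^ q⁻¹) ^ τ := Real.rpow_le_rpow hb hb_le hτ
    _ = (K / n) ^ (τ / q) := by rw [← Real.rpow_mul (by positivity), inv_mul_eq_div]

variable [DecidableEq ι]

lemma sum_rpow_le_of_card_filter_lt_le_of_le_one {F : Finset ι} (hK : 0 ≤ K) (hq : 0 < q)
    (hτ : 0 ≤ τ) (h0 : ∀ j ∈ F, 0 ≤ a j) (h1 : ∀ j ∈ F, a j ≤ 1)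
    (hcount : ∀ x, 0 < x → x ≤ 1 → (#{j ∈ F | x < a j} : ℝ) ≤ K * x ^ (-q)) :
    ∑ j ∈ F, a j ^ τ ≤ ∑ k ∈ range #F, (K / (k + 1 : ℕ)) ^ (τ / q) := by
  suffices ∀ G ⊆ F, ∑ j ∈ G, a j ^ τ ≤ ∑ k ∈ range #G, (K / (k + 1 : ℕ)) ^ (τ / q) from
    this F subset_rfl
  intro G
  induction G using Finset.induction_on_min_value a with
  | empty => simp
  | insert i G hi hmin ih =>
    -- `a i` is a smallest of the `#G + 1` values, so each `y < a i` lies below all of them.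
    intro hG
    rw [sum_insert hi, card_insert_of_notMem hi, sum_range_succ, add_comm]
    refine add_le_add (ih ((subset_insert i G).trans hG)) ?_
    refine rpow_le_div_rpow_of_forall_lt (Nat.succ_pos _) (h0 i (hG (mem_insert_self i G))) hK hq
      hτ fun y hy0 hyi => ?_
    have hsub : insert i G ⊆ {j ∈ F | y < a j} := fun j hj => by
      refine mem_filter.mpr ⟨hG hj, ?_⟩
      rcases mem_insert.mp hj with rfl | hj
      · exact hyi
      · exact hyi.trans_le (hmin j hj)
    calc ((#G + 1 : ℕ) : ℝ) = #(insert i G) := by rw [card_insert_of_notMem hi]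
      _ ≤ #{j ∈ F | y < a j} := by exact_mod_cast card_le_card hsub
      _ ≤ K * y ^ (-q) := hcount y hy0 (hyi.le.trans (h1 i (hG (mem_insert_self i G))))

lemma summable_natCast_add_one_rpow_neg {e : ℝ} (he : 1 < e) :
    Summable fun k : ℕ => ((k : ℝ) + 1) ^ (-e) := by
  simpa using (summable_nat_add_iff 1).2 (Real.summable_nat_rpow.2 (neg_lt_neg he))

lemma sum_rpow_le_of_card_filter_lt_le {F : Finset ι} {A : ℝ} (hA0 : 0 ≤ A) (hK : 0 ≤ K)
    (hq : 0 < q) (hqτ : q < τ) (h0 : ∀ j ∈ F, 0 ≤ a j) (hA : ∀ j ∈ F, a j ≤ A)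
    (hcount : ∀ x, 0 < x → x ≤ 1 → (#{j ∈ F | x < a j} : ℝ) ≤ K * x ^ (-q)) :
    ∑ j ∈ F, a j ^ τ ≤ K * A ^ τ + K ^ (τ / q) * ∑' k : ℕ, ((k : ℝ) + 1) ^ (-(τ / q)) := by
  have hτ : 0 < τ := hq.trans hqτ
  rw [← sum_filter_not_add_sum_filter F (fun j => a j ≤ 1)]
  refine add_le_add ?_ ?_
  · have hcard : (#{j ∈ F | ¬a j ≤ 1} : ℝ) ≤ K := by
      simpa [not_le] using hcount 1 one_pos le_rfl
    calc ∑ j ∈ F with ¬a j ≤ 1, a j ^ τ ≤ #{j ∈ F | ¬a j ≤ 1} • A ^ τ :=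
          sum_le_card_nsmul _ _ _ fun j hj => Real.rpow_le_rpow (h0 j (mem_filter.1 hj).1)
            (hA j (mem_filter.1 hj).1) hτ.le
      _ ≤ K * A ^ τ := by
          rw [nsmul_eq_mul]
          exact mul_le_mul_of_nonneg_right hcard (by positivity)
  · have he : 1 < τ / q := (one_lt_div hq).2 hqτ
    refine (sum_rpow_le_of_card_filter_lt_le_of_le_one hK hq hτ.le
      (fun j hj => h0 j (mem_filter.1 hj).1) (fun j hj => (mem_filter.1 hj).2)
      fun x hx0 hx1 => ?_).trans ?_
    · refine le_trans ?_ (hcount x hx0 hx1)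
      exact_mod_cast card_le_card (filter_subset_filter _ (filter_subset _ F))
    · calc ∑ k ∈ range #{j ∈ F | a j ≤ 1}, (K / (k + 1 : ℕ)) ^ (τ / q)
          = K ^ (τ / q) * ∑ k ∈ range #{j ∈ F | a j ≤ 1}, ((k : ℝ) + 1) ^ (-(τ / q)) := by
            rw [mul_sum]
            refine sum_congr rfl fun k _ => ?_
            rw [Real.div_rpow hK (by positivity), Real.rpow_neg (by positivity), div_eq_mul_inv,
              Nat.cast_add_one]
        _ ≤ K ^ (τ / q) * ∑' k : ℕ, ((k : ℝ) + 1) ^ (-(τ / q)) :=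
            mul_le_mul_of_nonneg_left ((summable_natCast_add_one_rpow_neg he).sum_le_tsum _
              fun k _ => by positivity) (by positivity)

end WeakType

lemma encard_le_ofReal_iff {α : Type*} {S : Set α} {y : ℝ} (hy : 0 ≤ y) :
    (S.encard : ℝ≥0∞) ≤ ENNReal.ofReal y ↔ ∀ F : Finset α, ↑F ⊆ S → (#F : ℝ) ≤ y := by
  constructor
  · intro h F hF
    have hF' : ((#F : ℕ) : ℝ≥0∞) ≤ ENNReal.ofReal y := by
      refine le_trans ?_ h
      have hle := Set.encard_mono hF
      rw [Set.encard_coe_eq_coe_finsetCard] at hle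
      exact_mod_cast hle
    simpa using (ENNReal.le_ofReal_iff_toReal_le (by simp) hy).1 hF'
  · intro h
    by_cases hfin : S.Finite
    · rw [hfin.encard_eq_coe_toFinset_card, ENat.toENNReal_coe,
        ENNReal.le_ofReal_iff_toReal_le (by simp) hy]
      simpa using h hfin.toFinset (by simp)
    · obtain ⟨F, hFS, hcard⟩ := Set.Infinite.exists_subset_card_eq hfin (⌈y⌉₊ + 1)
      have hFy := h F hFS
      rw [hcard] at hFy
      push_cast at hFy
      linarith [Nat.le_ceil y]

lemma eventually_mul_rpow_le_pow (c r : ℝ) {γ : ℝ} (hγ : 1 < γ) :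
    ∀ᶠ d : ℕ in atTop, c * (d : ℝ) ^ r ≤ γ ^ d := by
  have h := (((isLittleO_rpow_exp_pos_mul_atTop r (Real.log_pos hγ)).const_mul_left c).comp_tendsto
    tendsto_natCast_atTop_atTop).bound one_pos
  filter_upwards [h] with d hd
  rw [one_mul, Function.comp_apply, Function.comp_apply, Real.norm_of_nonneg (Real.exp_pos _).le,
    ← Real.rpow_def_of_pos (by linarith), Real.rpow_natCast] at hd
  exact (le_abs_self _).trans hd

lemma rpow_mul_pow_eq {c l S τ : ℝ} (hc : 0 ≤ c) (hl : 0 < l) (d : ℕ) :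
    c ^ τ * S ^ d = (c * l ^ d) ^ τ * (S / l ^ τ) ^ d := by
  have hpos : (0 : ℝ) < (l ^ τ) ^ d := by positivity
  rw [Real.mul_rpow hc (by positivity), ← Real.rpow_pow_comm hl.le, div_pow]
  field_simp

lemma mul_rpow_div_rpow {c S τ : ℝ} (hc : 0 ≤ c) (hS : 0 ≤ S) (hτ : τ ≠ 0) (d : ℕ) :
    (c * S ^ ((d : ℝ) / τ)) ^ τ = c ^ τ * S ^ d := by
  rw [Real.mul_rpow hc (by positivity), ← Real.rpow_mul hS, div_mul_cancel₀ _ hτ,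
    Real.rpow_natCast]

lemma rpow_inv_natCast_le_iff {x l t : ℝ} {d : ℕ} (hx : 0 ≤ x) (hl : 0 < l) (ht : 0 ≤ t)
    (hd : 1 ≤ d) : x ^ (d : ℝ)⁻¹ ≤ t ↔ x * l ^ d ≤ (t * l) ^ d := by
  rw [Real.rpow_inv_le_iff_of_pos hx ht (by positivity), Real.rpow_natCast, mul_pow,
    mul_le_mul_iff_of_pos_right (by positivity)]

lemma le_pow_of_rpow_mul_sq_pow_le {x p γ : ℝ} {d : ℕ} (hx : 0 ≤ x) (hp : 0 < p) (hγ : 0 < γ)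
    (h : x ^ p * (γ ^ 2) ^ d ≤ γ ^ d) : x ≤ (γ⁻¹ ^ p⁻¹) ^ d := by
  rw [← Real.rpow_le_rpow_iff hx (by positivity) hp, ← Real.rpow_pow_comm (by positivity),
    ← Real.rpow_mul (by positivity), inv_mul_cancel₀ hp.ne', Real.rpow_one, inv_pow, ← one_div,
    le_div_iff₀ (by positivity)]
  rw [← pow_mul, mul_comm 2 d, pow_mul, sq, ← mul_assoc] at h
  exact (mul_le_iff_le_one_left (by positivity)).1 h

lemma csInf_eq_csInf_of_forall_gt_mem {α : Type*} [ConditionallyCompleteLinearOrder α]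
    [DenselyOrdered α] [NoMaxOrder α] {P T : Set α} (hP : BddBelow P) (hPne : P.Nonempty)
    (hTP : T ⊆ P) (hPT : ∀ p ∈ P, ∀ x, p < x → x ∈ T) : sInf P = sInf T := by
  obtain ⟨p, hp⟩ := hPne
  obtain ⟨x, hx⟩ := exists_gt p
  refine le_antisymm (csInf_le_csInf hP ⟨x, hPT p hp x hx⟩ hTP) (le_csInf ⟨p, hp⟩ fun p hp => ?_)
  calc sInf T ≤ sInf (Set.Ioi p) :=
        csInf_le_csInf (hP.mono hTP) Set.nonempty_Ioi fun x hx => hPT p hp x hx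
    _ = p := csInf_Ioi

-- `∑_{m ≥ 1} λ_m^τ`: the sequence is indexed from `1`, and `lam 0` plays no role.
noncomputable def powSum (lam : ℕ → ℝ) (τ : ℝ) : ℝ := ∑' m : ℕ, lam (m + 1) ^ τ

section Tractability

variable {lam s : ℕ → ℝ} {K p τ : ℝ} {d : ℕ}

lemma powSum_nonneg (hnn : ∀ m, 0 ≤ lam m) : 0 ≤ powSum lam τ :=
  tsum_nonneg fun _ => Real.rpow_nonneg (hnn _) τ

lemma sum_range_rpow_le_powSum (hnn : ∀ m, 0 ≤ lam m)
    (hsum : Summable fun m : ℕ => lam (m + 1) ^ τ) (M : ℕ) :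
    ∑ m ∈ range M, lam (m + 1) ^ τ ≤ powSum lam τ :=
  hsum.sum_le_tsum _ fun _ _ => Real.rpow_nonneg (hnn _) τ

lemma one_lt_powSum_div (hnn : ∀ m, 0 ≤ lam m) (hl1 : 0 < lam 1) (hlam2 : 0 < lam 2)
    (hsum : Summable fun m : ℕ => lam (m + 1) ^ τ) : 1 < powSum lam τ / lam 1 ^ τ := by
  rw [one_lt_div (by positivity)]
  calc lam 1 ^ τ < lam 1 ^ τ + lam 2 ^ τ := lt_add_of_pos_right _ (by positivity)
    _ = ∑ m ∈ range 2, lam (m + 1) ^ τ := by simp [sum_range_succ]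
    _ ≤ powSum lam τ := sum_range_rpow_le_powSum hnn hsum 2

lemma sum_piFinset_Icc_rpow (hnn : ∀ m, 0 ≤ lam m) {c : ℝ} (hc : 0 ≤ c) (M : ℕ) :
    ∑ j ∈ Fintype.piFinset (fun _ : Fin d => Icc 1 M), (c * ∏ k, lam (j k)) ^ τ =
      c ^ τ * (∑ m ∈ range M, lam (m + 1) ^ τ) ^ d := by
  have hIcc : ∑ m ∈ Icc 1 M, lam m ^ τ = ∑ m ∈ range M, lam (m + 1) ^ τ := by
    rw [range_eq_Ico, sum_Ico_add' (fun m => lam m ^ τ) 0 M 1]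
    rfl
  simp_rw [Real.mul_rpow hc (prod_nonneg fun k _ => hnn _),
    ← Real.finsetProd_rpow _ _ (fun k _ => hnn _)]
  rw [← mul_sum, ← hIcc, sum_pow']

lemma exists_subset_piFinset_Icc {F : Finset (Fin d → ℕ)}
    (hF : ∀ j ∈ F, ∀ k, 1 ≤ j k) : ∃ M, F ⊆ Fintype.piFinset (fun _ : Fin d => Icc 1 M) :=
  ⟨F.sup fun j => univ.sup j, fun j hj => Fintype.mem_piFinset.2 fun k => mem_Icc.2
    ⟨hF j hj k, (le_sup (f := j) (mem_univ k)).trans (le_sup (f := fun j => univ.sup j) hj)⟩⟩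

lemma nScaled_le_ofReal {ε : ℝ} (hnn : ∀ m, 0 ≤ lam m) (hs : 0 ≤ s d)
    (hτ : 0 < τ) (hsum : Summable fun m : ℕ => lam (m + 1) ^ τ) (hε : 0 < ε) :
    (nScaled lam s ε d : ℝ≥0∞) ≤
      ENNReal.ofReal (s d ^ τ * powSum lam τ ^ d * ε ^ (-(2 * τ))) := by
  have hS := powSum_nonneg (τ := τ) hnn
  rw [nScaled, encard_le_ofReal_iff (by positivity)]
  intro F hF
  obtain ⟨M, hM⟩ := exists_subset_piFinset_Icc fun j hj => (hF hj).1
  have hεpow : 0 < (ε ^ 2) ^ τ := by positivity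
  have hmarkov : (#F : ℝ) * (ε ^ 2) ^ τ ≤ s d ^ τ * powSum lam τ ^ d :=
    calc (#F : ℝ) * (ε ^ 2) ^ τ ≤ ∑ j ∈ F, (s d * ∏ k, lam (j k)) ^ τ := by
          rw [← nsmul_eq_mul]
          exact card_nsmul_le_sum _ _ _ fun j hj =>
            Real.rpow_le_rpow (by positivity) (hF hj).2.le hτ.le
      _ ≤ ∑ j ∈ Fintype.piFinset (fun _ : Fin d => Icc 1 M), (s d * ∏ k, lam (j k)) ^ τ :=
          sum_le_sum_of_subset_of_nonneg hM fun j _ _ =>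
            Real.rpow_nonneg (mul_nonneg hs (prod_nonneg fun k _ => hnn _)) τ
      _ = s d ^ τ * (∑ m ∈ range M, lam (m + 1) ^ τ) ^ d := sum_piFinset_Icc_rpow hnn hs M
      _ ≤ s d ^ τ * powSum lam τ ^ d := by
          gcongr
          · exact sum_nonneg fun m _ => Real.rpow_nonneg (hnn _) τ
          · exact sum_range_rpow_le_powSum hnn hsum M
  have hε2 : ε ^ (-(2 * τ)) = ((ε ^ 2) ^ τ)⁻¹ := by
    rw [← Real.rpow_natCast, ← Real.rpow_mul hε.le, ← Real.rpow_neg hε.le]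
    norm_num
  rw [hε2, ← div_eq_mul_inv, le_div_iff₀ hεpow]
  exact hmarkov

lemma sum_rpow_le_of_nScaled_le (hnn : ∀ m, 0 ≤ lam m) (hle1 : ∀ m, 1 ≤ m → lam m ≤ lam 1)
    (hs : 0 ≤ s d) (hK : 0 ≤ K) (hp : 0 < p) (hpτ : p < 2 * τ)
    (hB : ∀ ε, 0 < ε → ε ≤ 1 → (nScaled lam s ε d : ℝ≥0∞) ≤ ENNReal.ofReal (K * ε ^ (-p)))
    (M : ℕ) :
    s d ^ τ * (∑ m ∈ range M, lam (m + 1) ^ τ) ^ d ≤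
      K * (s d * lam 1 ^ d) ^ τ +
        K ^ (τ / (p / 2)) * ∑' k : ℕ, ((k : ℝ) + 1) ^ (-(τ / (p / 2))) := by
  have hl1 := hnn 1
  rw [← sum_piFinset_Icc_rpow hnn hs M]
  refine sum_rpow_le_of_card_filter_lt_le (by positivity) hK (by positivity) (by linarith)
    (fun j _ => mul_nonneg hs (prod_nonneg fun k _ => hnn _)) (fun j hj => ?_) fun x hx0 hx1 => ?_
  · refine mul_le_mul_of_nonneg_left ?_ hs
    calc ∏ k, lam (j k) ≤ ∏ _k : Fin d, lam 1 :=
          prod_le_prod (fun k _ => hnn _)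
            fun k _ => hle1 _ (mem_Icc.1 (Fintype.mem_piFinset.1 hj k)).1
      _ = lam 1 ^ d := by simp
  · have hε : Real.sqrt x ^ 2 = x := Real.sq_sqrt hx0.le
    refine ((encard_le_ofReal_iff (by positivity)).1
      (hB _ (Real.sqrt_pos.2 hx0) (Real.sqrt_le_one.2 hx1)) _ fun j hj => ?_).trans_eq ?_
    · obtain ⟨hjM, hjx⟩ := mem_filter.1 (Finset.mem_coe.1 hj)
      exact ⟨fun k => (mem_Icc.1 (Fintype.mem_piFinset.1 hjM k)).1, by rwa [hε]⟩
    · rw [Real.sqrt_eq_rpow, ← Real.rpow_mul hx0.le, one_div_mul_eq_div, neg_div]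

lemma summable_of_nScaled_le (hnn : ∀ m, 0 ≤ lam m) (hle1 : ∀ m, 1 ≤ m → lam m ≤ lam 1)
    (hs : 0 < s 1) (hK : 0 ≤ K) (hp : 0 < p) (hpτ : p < 2 * τ)
    (hB : ∀ ε, 0 < ε → ε ≤ 1 → (nScaled lam s ε 1 : ℝ≥0∞) ≤ ENNReal.ofReal (K * ε ^ (-p))) :
    Summable fun m : ℕ => lam (m + 1) ^ τ :=
  summable_of_sum_range_le (fun _ => Real.rpow_nonneg (hnn _) τ) fun M => by
    have h := sum_rpow_le_of_nScaled_le hnn hle1 hs.le hK hp hpτ hB M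
    rwa [pow_one, ← le_div_iff₀' (by positivity)] at h

lemma rpow_mul_powSum_pow_le_two_mul (hnn : ∀ m, 0 ≤ lam m)
    (hle1 : ∀ m, 1 ≤ m → lam m ≤ lam 1) (hl1 : 0 < lam 1) (hs : 0 ≤ s d) (hK : 0 ≤ K)
    (hp : 0 < p) (hpτ : p < 2 * τ)
    (hB : ∀ ε, 0 < ε → ε ≤ 1 → (nScaled lam s ε d : ℝ≥0∞) ≤ ENNReal.ofReal (K * ε ^ (-p)))
    (hsum : Summable fun m : ℕ => lam (m + 1) ^ τ)
    (hK2 : 2 * K ≤ (powSum lam τ / lam 1 ^ τ) ^ d) :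
    s d ^ τ * powSum lam τ ^ d ≤
      2 * (K ^ (τ / (p / 2)) * ∑' k : ℕ, ((k : ℝ) + 1) ^ (-(τ / (p / 2)))) := by
  have h := le_of_tendsto' ((hsum.hasSum.tendsto_sum_nat.pow d).const_mul (s d ^ τ))
    (sum_rpow_le_of_nScaled_le hnn hle1 hs hK hp hpτ hB)
  have hx : 0 ≤ (s d * lam 1 ^ d) ^ τ := by positivity
  rw [← powSum, rpow_mul_pow_eq hs hl1] at h
  rw [rpow_mul_pow_eq hs hl1]
  nlinarith [mul_le_mul_of_nonneg_left hK2 hx]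

lemma condIII_of_eventually_le {c : ℝ} (hτ : 0 < τ)
    (hsum : Summable fun m : ℕ => lam (m + 1) ^ τ)
    (h : ∀ᶠ d : ℕ in atTop, s d * powSum lam τ ^ ((d : ℝ) / τ) ≤ c) : CondIII lam s τ := by
  obtain ⟨B, hB⟩ := (isBoundedUnder_of_eventually_le h).bddAbove_range
  exact ⟨hτ, hsum, B, fun d _ => hB ⟨d, rfl⟩⟩

lemma condIII_of_nScaled_le (hnn : ∀ m, 0 ≤ lam m)
    (hle1 : ∀ m, 1 ≤ m → lam m ≤ lam 1) (hl1 : 0 < lam 1) (hlam2 : 0 < lam 2)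
    (hs : ∀ d, 0 < s d) (hK : 0 < K) (hp : 0 < p) (hpτ : p < 2 * τ)
    (hB : ∀ d : ℕ, 1 ≤ d → ∀ ε : ℝ, 0 < ε → ε ≤ 1 →
      (nScaled lam s ε d : ℝ≥0∞) ≤ ENNReal.ofReal (K * ε ^ (-p))) :
    CondIII lam s τ := by
  have hτ : 0 < τ := by linarith
  have hsum := summable_of_nScaled_le hnn hle1 (hs 1) hK.le hp hpτ (hB 1 le_rfl)
  have hS := powSum_nonneg (τ := τ) hnn
  have hβ := one_lt_powSum_div hnn hl1 hlam2 hsum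
  refine condIII_of_eventually_le hτ hsum
    (c := (2 * (K ^ (τ / (p / 2)) * ∑' k : ℕ, ((k : ℝ) + 1) ^ (-(τ / (p / 2))))) ^ τ⁻¹) ?_
  filter_upwards [(tendsto_pow_atTop_atTop_of_one_lt hβ).eventually_ge_atTop (2 * K),
    eventually_ge_atTop 1] with d hβd hd
  have hsd := hs d
  rw [Real.le_rpow_inv_iff_of_pos (by positivity) (by positivity) hτ,
    mul_rpow_div_rpow (hs d).le hS hτ.ne']
  exact rpow_mul_powSum_pow_le_two_mul hnn hle1 hl1 (hs d).le hK.le hp hpτ (hB d hd) hsum hβd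

lemma exists_eventually_le_pow_of_ptScaled (hnn : ∀ m, 0 ≤ lam m)
    (hle1 : ∀ m, 1 ≤ m → lam m ≤ lam 1) (hl1 : 0 < lam 1) (hlam2 : 0 < lam 2)
    (hs : ∀ d, 0 < s d) (h : PTScaled lam s) :
    ∃ ρ : ℝ, 0 < ρ ∧ Summable (fun m : ℕ => lam (m + 1) ^ ρ) ∧
      ∃ θ : ℝ, 0 < θ ∧ θ < 1 ∧ ∀ᶠ d : ℕ in atTop, s d * lam 1 ^ d ≤ θ ^ d := by
  obtain ⟨C, hC, p, hp, q, -, hB⟩ := h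
  have hBd : ∀ d, 1 ≤ d → ∀ ε, 0 < ε → ε ≤ 1 →
      (nScaled lam s ε d : ℝ≥0∞) ≤ ENNReal.ofReal (C * (d : ℝ) ^ q * ε ^ (-p)) := by
    intro d hd ε hε0 hε1
    rw [mul_right_comm]
    exact hB d hd ε hε0 hε1
  have hpp : p < 2 * p := by linarith
  have hsum := summable_of_nScaled_le hnn hle1 (hs 1) (by positivity) hp hpp (hBd 1 le_rfl)
  set β := powSum lam p / lam 1 ^ p
  have hβ : 1 < β := one_lt_powSum_div hnn hl1 hlam2 hsum
  -- Taking `γ = √β` leaves a factor `γ^d` to dominate the polynomial growth in `d`.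
  set γ := Real.sqrt β
  have hγ : 1 < γ := Real.lt_sqrt_of_sq_lt (by simpa using hβ)
  have hγβ : γ ^ 2 = β := Real.sq_sqrt (by linarith)
  set e := p / (p / 2)
  set Z := ∑' k : ℕ, ((k : ℝ) + 1) ^ (-e)
  have hZ : 0 ≤ Z := tsum_nonneg fun k => by positivity
  refine ⟨p, hp, hsum, γ⁻¹ ^ p⁻¹, by positivity,
    Real.rpow_lt_one (by positivity) (inv_lt_one_of_one_lt₀ hγ) (by positivity), ?_⟩
  filter_upwards [eventually_mul_rpow_le_pow (2 * C) q hγ,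
    eventually_mul_rpow_le_pow (2 * C ^ e * Z) (q * e) hγ, eventually_ge_atTop 1]
    with d hK hL hd
  have hK2 : 2 * (C * (d : ℝ) ^ q) ≤ β ^ d := by
    rw [← mul_assoc, ← hγβ, ← pow_mul]
    exact hK.trans (pow_le_pow_right₀ hγ.le (by omega))
  have hL' : 2 * ((C * (d : ℝ) ^ q) ^ e * Z) ≤ γ ^ d := by
    rw [Real.mul_rpow hC.le (by positivity), ← Real.rpow_mul (by positivity)]
    linarith
  have hpow := (rpow_mul_powSum_pow_le_two_mul hnn hle1 hl1 (hs d).le (by positivity) hp hpp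
    (hBd d hd) hsum hK2).trans hL'
  rw [rpow_mul_pow_eq (hs d).le hl1] at hpow
  have hsd := hs d
  exact le_pow_of_rpow_mul_sq_pow_le (by positivity) hp (by positivity) (by rw [hγβ]; exact hpow)

lemma exists_condIII_of_eventually_le_pow {ρ θ : ℝ} (hnn : ∀ m, 0 ≤ lam m)
    (hle1 : ∀ m, 1 ≤ m → lam m ≤ lam 1) (hl1 : 0 < lam 1) (hs : ∀ d, 0 ≤ s d) (hρ : 0 < ρ)
    (hsum : Summable fun m : ℕ => lam (m + 1) ^ ρ) (hθ0 : 0 < θ) (hθ1 : θ < 1)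
    (h : ∀ᶠ d : ℕ in atTop, s d * lam 1 ^ d ≤ θ ^ d) : ∃ τ, CondIII lam s τ := by
  have hSρ : 0 < powSum lam ρ := calc
    0 < lam 1 ^ ρ := by positivity
    _ = ∑ m ∈ range 1, lam (m + 1) ^ ρ := by simp
    _ ≤ powSum lam ρ := sum_range_rpow_le_powSum hnn hsum 1
  obtain ⟨n, hn⟩ :=
    exists_pow_lt_of_lt_one (x := lam 1 ^ ρ / powSum lam ρ) (div_pos (by positivity) hSρ) hθ1
  set τ := ρ + n
  have hτ : 0 < τ := by positivity
  have hterm : ∀ m : ℕ, lam (m + 1) ^ τ ≤ lam 1 ^ n * lam (m + 1) ^ ρ := fun m => by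
    rw [Real.rpow_add' (hnn _) hτ.ne', Real.rpow_natCast, mul_comm]
    exact mul_le_mul_of_nonneg_right (pow_le_pow_left₀ (hnn _) (hle1 _ (by omega)) n)
      (Real.rpow_nonneg (hnn _) ρ)
  have hsumτ : Summable fun m : ℕ => lam (m + 1) ^ τ :=
    (hsum.mul_left _).of_nonneg_of_le (fun m => Real.rpow_nonneg (hnn _) τ) hterm
  have hSτ : powSum lam τ ≤ lam 1 ^ n * powSum lam ρ :=
    (hsumτ.tsum_le_tsum hterm (hsum.mul_left _)).trans_eq tsum_mul_left
  have hnorm : powSum lam τ ^ τ⁻¹ ≤ lam 1 / θ := by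
    rw [Real.rpow_inv_le_iff_of_pos (powSum_nonneg hnn) (by positivity) hτ,
      Real.div_rpow hl1.le hθ0.le, le_div_iff₀ (by positivity)]
    have hθn : θ ^ n * powSum lam ρ ≤ lam 1 ^ ρ := by
      rw [lt_div_iff₀ hSρ] at hn
      exact hn.le
    have hθρ : θ ^ ρ ≤ 1 := Real.rpow_le_one hθ0.le hθ1.le hρ.le
    calc powSum lam τ * θ ^ τ ≤ lam 1 ^ n * powSum lam ρ * (θ ^ ρ * θ ^ n) := by
          rw [Real.rpow_add hθ0, Real.rpow_natCast]
          gcongr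
      _ = θ ^ ρ * (θ ^ n * powSum lam ρ) * lam 1 ^ n := by ring
      _ ≤ 1 * lam 1 ^ ρ * lam 1 ^ n := by gcongr
      _ = lam 1 ^ τ := by rw [one_mul, Real.rpow_add hl1, Real.rpow_natCast]
  refine ⟨τ, condIII_of_eventually_le hτ hsumτ (c := 1) ?_⟩
  filter_upwards [h] with d hd
  calc s d * powSum lam τ ^ ((d : ℝ) / τ) = s d * (powSum lam τ ^ τ⁻¹) ^ d := by
        rw [← Real.rpow_natCast, ← Real.rpow_mul (powSum_nonneg hnn), div_eq_inv_mul]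
    _ ≤ s d * (lam 1 / θ) ^ d := by
        gcongr
        · exact hs d
        · exact Real.rpow_nonneg (powSum_nonneg hnn) _
    _ = s d * lam 1 ^ d / θ ^ d := by rw [div_pow, mul_div_assoc]
    _ ≤ 1 := div_le_one_of_le₀ hd (by positivity)

lemma exists_eventually_rpow_inv_le_iff {l : ℝ} (hs : ∀ d, 0 < s d) (hl : 0 < l) :
    (∃ t : ℝ, t < 1 / l ∧ ∀ᶠ d : ℕ in atTop, s d ^ ((d : ℝ))⁻¹ ≤ t) ↔
      ∃ θ : ℝ, 0 < θ ∧ θ < 1 ∧ ∀ᶠ d : ℕ in atTop, s d * l ^ d ≤ θ ^ d := by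
  constructor
  · rintro ⟨t, htl, h⟩
    obtain ⟨d, hd⟩ := h.exists
    have ht : 0 < t := (Real.rpow_pos_of_pos (hs d) _).trans_le hd
    refine ⟨t * l, by positivity, (lt_div_iff₀ hl).1 htl, ?_⟩
    filter_upwards [h, eventually_ge_atTop 1] with d hd hd1
    exact (rpow_inv_natCast_le_iff (hs d).le hl ht.le hd1).1 hd
  · rintro ⟨θ, hθ0, hθ1, h⟩
    refine ⟨θ / l, div_lt_div_of_pos_right hθ1 hl, ?_⟩
    filter_upwards [h, eventually_ge_atTop 1] with d hd hd1
    rwa [rpow_inv_natCast_le_iff (hs d).le hl (by positivity) hd1, div_mul_cancel₀ _ hl.ne']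

def sptExponents (lam s : ℕ → ℝ) : Set ℝ :=
  {p : ℝ | 0 < p ∧ ∃ C : ℝ, 0 < C ∧ ∀ d : ℕ, 1 ≤ d → ∀ ε : ℝ, 0 < ε → ε ≤ 1 →
    (nScaled lam s ε d : ℝ≥0∞) ≤ ENNReal.ofReal (C * ε ^ (-p))}

lemma two_mul_mem_sptExponents (hnn : ∀ m, 0 ≤ lam m)
    (hs : ∀ d, 0 ≤ s d) (h : CondIII lam s τ) : 2 * τ ∈ sptExponents lam s := by
  obtain ⟨hτ, hsum, B, hB⟩ := h
  refine ⟨by positivity, max B 1 ^ τ, by positivity, fun d hd ε hε0 _ => ?_⟩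
  refine (nScaled_le_ofReal hnn (hs d) hτ hsum hε0).trans (ENNReal.ofReal_le_ofReal ?_)
  have hS := powSum_nonneg (τ := τ) hnn
  have hsd := hs d
  gcongr
  rw [← mul_rpow_div_rpow (hs d) hS hτ.ne']
  exact Real.rpow_le_rpow (by positivity) ((hB d hd).trans (le_max_left B 1)) hτ.le

lemma condIII_of_mem_sptExponents (hnn : ∀ m, 0 ≤ lam m)
    (hle1 : ∀ m, 1 ≤ m → lam m ≤ lam 1) (hl1 : 0 < lam 1) (hlam2 : 0 < lam 2)
    (hs : ∀ d, 0 < s d) (hp : p ∈ sptExponents lam s) (hpτ : p < 2 * τ) : CondIII lam s τ :=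
  let ⟨hp0, _, hC, hB⟩ := hp
  condIII_of_nScaled_le hnn hle1 hl1 hlam2 hs hC hp0 hpτ hB

end Tractability

/-- **Paper Theorem 3.1** (polynomial tractability of scaled tensor product problems,
absolute error criterion): for a non-increasing sequence `lam` of nonnegative reals with
`lam 2 > 0` and positive scalings `s`, the assertions (I) strong polynomial tractability,
(II) polynomial tractability, (III) `∃ τ`, `λ ∈ ℓ_τ` and `sup_d s_d ‖λ‖_τ^d < ∞`, and
(IV) `∃ ρ`, `λ ∈ ℓ_ρ` and `limsup_d s_d^{1/d} < 1/λ₁` are all equivalent, and then the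
exponent of strong polynomial tractability is `inf { 2τ : τ satisfies (III) }`. -/
theorem stmt6 (lam : ℕ → ℝ) (s : ℕ → ℝ)
    (hnn : ∀ m, 0 ≤ lam m)
    (hord : ∀ m m' : ℕ, 1 ≤ m → m ≤ m' → lam m' ≤ lam m)
    (hlam2 : 0 < lam 2) (hs : ∀ d, 0 < s d) :
    (SPTScaled lam s ↔ PTScaled lam s) ∧
    (PTScaled lam s ↔ ∃ τ : ℝ, CondIII lam s τ) ∧
    ((∃ τ : ℝ, CondIII lam s τ) ↔
      ∃ ρ : ℝ, 0 < ρ ∧ Summable (fun m : ℕ => lam (m + 1) ^ ρ) ∧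
        ∃ t : ℝ, t < 1 / lam 1 ∧ ∀ᶠ d : ℕ in atTop, s d ^ ((d : ℝ))⁻¹ ≤ t) ∧
    (SPTScaled lam s →
      sInf {p : ℝ | 0 < p ∧ ∃ C : ℝ, 0 < C ∧ ∀ d : ℕ, 1 ≤ d → ∀ ε : ℝ, 0 < ε → ε ≤ 1 →
          (nScaled lam s ε d : ℝ≥0∞) ≤ ENNReal.ofReal (C * ε ^ (-p))} =
        sInf {x : ℝ | ∃ τ : ℝ, CondIII lam s τ ∧ x = 2 * τ}) := by
  have hle1 : ∀ m, 1 ≤ m → lam m ≤ lam 1 := fun m => hord 1 m le_rfl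
  have hl1 : 0 < lam 1 := hlam2.trans_le (hle1 2 one_le_two)
  have hs0 : ∀ d, 0 ≤ s d := fun d => (hs d).le
  have hI_II : SPTScaled lam s → PTScaled lam s := fun ⟨C, hC, p, hp, hB⟩ =>
    ⟨C, hC, p, hp, 0, le_rfl, by simpa using hB⟩
  have hII_IV := exists_eventually_le_pow_of_ptScaled hnn hle1 hl1 hlam2 hs
  have hIV_III : (∃ ρ : ℝ, 0 < ρ ∧ Summable (fun m : ℕ => lam (m + 1) ^ ρ) ∧
      ∃ θ : ℝ, 0 < θ ∧ θ < 1 ∧ ∀ᶠ d : ℕ in atTop, s d * lam 1 ^ d ≤ θ ^ d) →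
      ∃ τ, CondIII lam s τ := fun ⟨_, hρ, hsum, _, hθ0, hθ1, h⟩ =>
    exists_condIII_of_eventually_le_pow hnn hle1 hl1 hs0 hρ hsum hθ0 hθ1 h
  have hIII_I : (∃ τ, CondIII lam s τ) → SPTScaled lam s := fun ⟨τ, hτ⟩ =>
    let ⟨hp, C, hC, hB⟩ := two_mul_mem_sptExponents hnn hs0 hτ
    ⟨C, hC, 2 * τ, hp, hB⟩
  simp only [exists_eventually_rpow_inv_le_iff hs hl1]
  refine ⟨⟨hI_II, fun h => hIII_I (hIV_III (hII_IV h))⟩,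
    ⟨fun h => hIV_III (hII_IV h), fun h => hI_II (hIII_I h)⟩,
    ⟨fun h => hII_IV (hI_II (hIII_I h)), hIV_III⟩, fun ⟨C, hC, p, hp, hB⟩ => ?_⟩
  refine csInf_eq_csInf_of_forall_gt_mem (P := sptExponents lam s) ⟨0, fun p hp => hp.1.le⟩
    ⟨p, hp, C, hC, hB⟩ ?_ fun p hp x hx => ⟨x / 2, ?_, by ring⟩
  · rintro _ ⟨τ, hτ, rfl⟩
    exact two_mul_mem_sptExponents hnn hs0 hτ
  · exact condIII_of_mem_sptExponents hnn hle1 hl1 hlam2 hs hp (by linarith)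
end

section
/- Let λ = (λ_m)_{m≥1} be a non-increasing sequence of nonnegative reals with λ₂ > 0, let s₁ > 0, and define the univariate information complexity n(ε,1) = #{ m ≥ 1 : s₁·λ_m > ε² }. Then for every β ≥ 1 the following are equivalent: (i) λ_n·(ln n)^{2β} → 0 as n → ∞; (ii) t · ln( max( n(t^β, 1), 1) ) → 0 as t → 0⁺. -/
open Filter Topology Real Set

/-!
Since `λ` is non-increasing, the indices counted by `n(ε, 1)` form an initial segment
`{1, …, n(ε, 1)}`, so `m ≤ n(ε, 1)` exactly when `s₁ λ_m > ε²`.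

(i) ⇒ (ii): for `n = n(t^β, 1) ≥ 1` we have `t^{2β} < s₁ λ_n`, hence
`(t ln n)^{2β} < s₁ λ_n ln^{2β} n`, which is small once `n` is large; for bounded `n`,
`t ln n → 0` trivially.

(ii) ⇒ (i): choose `t_m` with `t_m^{2β} = s₁ λ_m / 2`. Then `m ≤ n(t_m^β, 1)`, so
`λ_m ln^{2β} m = (2 / s₁) (t_m ln m)^{2β} ≤ (2 / s₁) (t_m ln n(t_m^β, 1))^{2β}`, and `t_m → 0`
because finiteness of every `n(ε, 1)` forces `λ_m → 0`.
-/

/-- `n(ε, 1)` is the cardinality of `infoIndices lam s₁ (ε ^ 2)`. -/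
def infoIndices (lam : ℕ → ℝ) (s c : ℝ) : Set ℕ := {m : ℕ | 1 ≤ m ∧ c < s * lam m}

theorem Set.Finite.eq_Icc_one_ncard {S : Set ℕ} (hS : S.Finite) (h1 : ∀ x ∈ S, 1 ≤ x)
    (hdown : ∀ x ∈ S, ∀ y, 1 ≤ y → y ≤ x → y ∈ S) : S = Icc 1 S.ncard := by
  have hsSup : S = Icc 1 (sSup S) := by
    ext x
    refine ⟨fun hx => ⟨h1 x hx, le_csSup hS.bddAbove hx⟩, fun ⟨hx1, hxK⟩ => ?_⟩
    rcases S.eq_empty_or_nonempty with rfl | hne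
    · simp only [csSup_empty, Nat.bot_eq_zero, nonpos_iff_eq_zero] at hxK
      omega
    · exact hdown _ (Nat.sSup_mem hne hS.bddAbove) x hx1 hxK
  have hcard : S.ncard = sSup S := by
    calc S.ncard = (Icc 1 (sSup S)).ncard := congrArg ncard hsSup
      _ = sSup S := by simp
  rwa [hcard]

section InfoIndices

variable {lam : ℕ → ℝ} {s c : ℝ}

theorem infoIndices_eq_Icc (hs : 0 ≤ s) (hord : ∀ m m' : ℕ, 1 ≤ m → m ≤ m' → lam m' ≤ lam m)
    (hfin : (infoIndices lam s c).Finite) :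
    infoIndices lam s c = Icc 1 (infoIndices lam s c).ncard :=
  hfin.eq_Icc_one_ncard (fun _ hx => hx.1) fun _ hx y hy hyx =>
    ⟨hy, hx.2.trans_le (mul_le_mul_of_nonneg_left (hord y _ hy hyx) hs)⟩

theorem infoIndices_finite_of_tendsto (hlam : Tendsto lam atTop (𝓝 0)) (hc : 0 < c) :
    (infoIndices lam s c).Finite := by
  have hsmall : ∀ᶠ m in atTop, s * lam m < c := by
    simpa using (hlam.const_mul s).eventually (gt_mem_nhds (by simpa using hc))
  obtain ⟨M, hM⟩ := hsmall.exists_forall_of_atTop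
  exact (finite_Iio M).subset fun m hm => not_le.1 fun hMm => (hM m hMm).not_gt hm.2

theorem tendsto_zero_of_infoIndices_finite (hnn : ∀ m, 0 ≤ lam m)
    (hord : ∀ m m' : ℕ, 1 ≤ m → m ≤ m' → lam m' ≤ lam m) (hs : 0 < s)
    (hfin : ∀ c, 0 < c → (infoIndices lam s c).Finite) : Tendsto lam atTop (𝓝 0) := by
  refine tendsto_order.2 ⟨fun a ha => .of_forall fun m => ha.trans_le (hnn m), fun a ha => ?_⟩
  obtain ⟨M, hM⟩ := (hfin (s * (a / 2)) (by positivity)).bddAbove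
  have hlamM : lam (M + 1) ≤ a / 2 := by
    by_contra hlt
    have hmem : M + 1 ∈ infoIndices lam s (s * (a / 2)) :=
      ⟨by omega, mul_lt_mul_of_pos_left (not_le.1 hlt) hs⟩
    exact (hM hmem).not_gt (Nat.lt_succ_self M)
  filter_upwards [eventually_ge_atTop (M + 1)] with m hm
  linarith [hord (M + 1) m (by omega) hm]

end InfoIndices

theorem tendsto_zero_of_tendsto_mul_log_rpow {lam : ℕ → ℝ} {p : ℝ} (hp : 0 < p)
    (h : Tendsto (fun m : ℕ => lam m * log m ^ p) atTop (𝓝 0)) : Tendsto lam atTop (𝓝 0) := by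
  have hlog : Tendsto (fun m : ℕ => (log m ^ p)⁻¹) atTop (𝓝 0) :=
    tendsto_inv_atTop_zero.comp
      ((tendsto_rpow_atTop hp).comp (tendsto_log_atTop.comp tendsto_natCast_atTop_atTop))
  have hprod := h.mul hlog
  rw [mul_zero] at hprod
  refine hprod.congr' ?_
  filter_upwards [eventually_ge_atTop 2] with m hm
  have : 0 < log m ^ p := rpow_pos_of_pos (log_pos (by exact_mod_cast hm)) p
  field_simp

theorem tendsto_mul_log_of_rpow_le {α : Type*} {l : Filter α} {t : α → ℝ} {n : α → ℕ}
    {φ : ℕ → ℝ} {p : ℝ} (hp : 0 < p) (ht : Tendsto t l (𝓝 0)) (hφ : Tendsto φ atTop (𝓝 0))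
    (hbound : ∀ᶠ a in l, 0 ≤ t a ∧ (t a * log (n a)) ^ p ≤ φ (n a)) :
    Tendsto (fun a => t a * log (n a)) l (𝓝 0) := by
  refine tendsto_order.2 ⟨fun b hb => ?_, fun ε hε => ?_⟩
  · filter_upwards [hbound] with a ha
    exact hb.trans_le (mul_nonneg ha.1 (log_natCast_nonneg _))
  obtain ⟨K, hK⟩ := eventually_atTop.1 (hφ.eventually (gt_mem_nhds (rpow_pos_of_pos hε p)))
  have htK : Tendsto (fun a => t a * log K) l (𝓝 0) := by simpa using ht.mul_const (log K)
  filter_upwards [hbound, htK.eventually (gt_mem_nhds hε)] with a ⟨ht0, hle⟩ htKε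
  rcases le_total K (n a) with hKn | hnK
  · exact (rpow_lt_rpow_iff (mul_nonneg ht0 (log_natCast_nonneg _)) hε.le hp).1
      (hle.trans_lt (hK _ hKn))
  · refine lt_of_le_of_lt (mul_le_mul_of_nonneg_left ?_ ht0) htKε
    rcases Nat.eq_zero_or_pos (n a) with h0 | hpos
    · simp [h0, log_natCast_nonneg]
    · exact log_le_log (by exact_mod_cast hpos) (by exact_mod_cast hnK)

section Complexity

variable {lam : ℕ → ℝ} {s p : ℝ}

theorem tendsto_mul_log_ncard_infoIndices (hord : ∀ m m' : ℕ, 1 ≤ m → m ≤ m' → lam m' ≤ lam m)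
    (hs : 0 < s) (hp : 0 < p) (h : Tendsto (fun m : ℕ => lam m * log m ^ p) atTop (𝓝 0))
    (hfin : ∀ t : ℝ, 0 < t → (infoIndices lam s (t ^ p)).Finite) :
    Tendsto (fun t : ℝ => t * log (max ((infoIndices lam s (t ^ p)).ncard : ℝ) 1))
      (𝓝[>] 0) (𝓝 0) := by
  simp_rw [← Nat.cast_one (R := ℝ), ← Nat.cast_max]
  refine tendsto_mul_log_of_rpow_le hp nhdsWithin_le_nhds (by simpa using h.const_mul s) ?_
  filter_upwards [self_mem_nhdsWithin] with t (ht : 0 < t)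
  refine ⟨ht.le, ?_⟩
  set N := (infoIndices lam s (t ^ p)).ncard
  rcases Nat.eq_zero_or_pos N with hN | hN
  · simp [hN, zero_rpow hp.ne']
  have hNmem : N ∈ infoIndices lam s (t ^ p) := by
    rw [infoIndices_eq_Icc hs.le hord (hfin t ht)]
    exact ⟨hN, le_rfl⟩
  rw [max_eq_left hN, mul_rpow ht.le (log_natCast_nonneg _), ← mul_assoc]
  exact mul_le_mul_of_nonneg_right (le_of_lt hNmem.2) (rpow_nonneg (log_natCast_nonneg _) _)

theorem tendsto_mul_log_rpow_of_tendsto_mul_log_ncard (hnn : ∀ m, 0 ≤ lam m)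
    (hord : ∀ m m' : ℕ, 1 ≤ m → m ≤ m' → lam m' ≤ lam m) (hs : 0 < s) (hp : 0 < p)
    (hfin : ∀ t : ℝ, 0 < t → (infoIndices lam s (t ^ p)).Finite)
    (h : Tendsto (fun t : ℝ => t * log (max ((infoIndices lam s (t ^ p)).ncard : ℝ) 1))
      (𝓝[>] 0) (𝓝 0)) :
    Tendsto (fun m : ℕ => lam m * log m ^ p) atTop (𝓝 0) := by
  set F := fun t : ℝ => t * log (max ((infoIndices lam s (t ^ p)).ncard : ℝ) 1)
  have hF : Tendsto F (𝓝[≥] 0) (𝓝 0) := by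
    rw [← Ioi_insert, nhdsWithin_insert]
    exact tendsto_sup.2 ⟨by simpa [F] using tendsto_pure_nhds F 0, h⟩
  have hlam : Tendsto lam atTop (𝓝 0) := by
    refine tendsto_zero_of_infoIndices_finite hnn hord hs fun c hc => ?_
    simpa [rpow_inv_rpow hc.le hp.ne'] using hfin (c ^ p⁻¹) (by positivity)
  -- The factor `1 / 2` makes `τ m ^ p < s λ_m`, so that `m` is counted at `τ m`.
  set τ := fun m : ℕ => (s * lam m / 2) ^ p⁻¹
  have hslam (m : ℕ) : 0 ≤ s * lam m / 2 := by have := hnn m; positivity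
  have hτnn (m : ℕ) : 0 ≤ τ m := rpow_nonneg (hslam m) _
  have hτ : Tendsto τ atTop (𝓝[≥] 0) := by
    refine tendsto_nhdsWithin_iff.2 ⟨?_, .of_forall hτnn⟩
    simpa [zero_rpow (inv_ne_zero hp.ne')] using
      ((hlam.const_mul s).div_const 2).rpow_const (Or.inr (inv_nonneg.2 hp.le))
  have hτp (m : ℕ) : τ m ^ p = s * lam m / 2 := rpow_inv_rpow (hslam m) hp.ne'
  have hle : ∀ᶠ m in atTop, τ m * log m ≤ F (τ m) := by
    filter_upwards [eventually_ge_atTop 1] with m hm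
    rcases (hnn m).eq_or_lt with hzero | hpos
    · simp [τ, F, ← hzero, zero_rpow (inv_ne_zero hp.ne')]
    have hmem : m ∈ infoIndices lam s (τ m ^ p) := ⟨hm, by rw [hτp]; linarith [mul_pos hs hpos]⟩
    have hτpos : 0 < τ m := rpow_pos_of_pos (by positivity) _
    rw [infoIndices_eq_Icc hs.le hord (hfin _ hτpos)] at hmem
    refine mul_le_mul_of_nonneg_left (log_le_log (by exact_mod_cast hm) ?_) hτpos.le
    exact le_max_of_le_left (by exact_mod_cast hmem.2)
  have hτlog : Tendsto (fun m => τ m * log m) atTop (𝓝 0) :=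
    tendsto_of_tendsto_of_tendsto_of_le_of_le' tendsto_const_nhds (hF.comp hτ)
      (.of_forall fun m => mul_nonneg (hτnn m) (log_natCast_nonneg m)) hle
  have hlim := (hτlog.rpow_const (Or.inr hp.le)).const_mul (2 / s)
  rw [zero_rpow hp.ne', mul_zero] at hlim
  refine hlim.congr fun m => ?_
  rw [mul_rpow (hτnn m) (log_natCast_nonneg m), hτp]
  field_simp

theorem tendsto_mul_log_rpow_iff (hnn : ∀ m, 0 ≤ lam m)
    (hord : ∀ m m' : ℕ, 1 ≤ m → m ≤ m' → lam m' ≤ lam m) (hs : 0 < s) (hp : 0 < p) :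
    Tendsto (fun m : ℕ => lam m * log m ^ p) atTop (𝓝 0) ↔
      ((∀ t : ℝ, 0 < t → (infoIndices lam s (t ^ p)).Finite) ∧
        Tendsto (fun t : ℝ => t * log (max ((infoIndices lam s (t ^ p)).ncard : ℝ) 1))
          (𝓝[>] 0) (𝓝 0)) := by
  refine ⟨fun h => ?_, fun ⟨hfin, h⟩ =>
    tendsto_mul_log_rpow_of_tendsto_mul_log_ncard hnn hord hs hp hfin h⟩
  have hfin (t : ℝ) (ht : 0 < t) : (infoIndices lam s (t ^ p)).Finite :=
    infoIndices_finite_of_tendsto (tendsto_zero_of_tendsto_mul_log_rpow hp h)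
      (rpow_pos_of_pos ht p)
  exact ⟨hfin, tendsto_mul_log_ncard_infoIndices hord hs hp h hfin⟩

end Complexity

theorem stmt8_general (lam : ℕ → ℝ) (s₁ : ℝ)
    (hnn : ∀ m, 0 ≤ lam m)
    (hord : ∀ m m' : ℕ, 1 ≤ m → m ≤ m' → lam m' ≤ lam m)
    (hs : 0 < s₁) (β : ℝ) (hβ : 1 ≤ β) :
    Tendsto (fun m : ℕ => lam m * Real.log m ^ (2 * β)) atTop (nhds 0) ↔
      ((∀ t : ℝ, 0 < t → {m : ℕ | 1 ≤ m ∧ (t ^ β) ^ 2 < s₁ * lam m}.Finite) ∧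
        Tendsto (fun t : ℝ =>
            t * Real.log (max (({m : ℕ | 1 ≤ m ∧ (t ^ β) ^ 2 < s₁ * lam m}.ncard : ℝ)) 1))
          (nhdsWithin 0 (Set.Ioi 0)) (nhds 0)) := by
  have hset (t : ℝ) (ht : 0 < t) :
      {m : ℕ | 1 ≤ m ∧ (t ^ β) ^ 2 < s₁ * lam m} = infoIndices lam s₁ (t ^ (2 * β)) := by
    rw [infoIndices, ← rpow_natCast, ← rpow_mul ht.le, mul_comm]
    norm_num
  rw [tendsto_mul_log_rpow_iff hnn hord hs (by linarith : 0 < 2 * β)]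
  refine and_congr (forall₂_congr fun t ht => by rw [hset t ht]) (tendsto_congr' ?_)
  filter_upwards [self_mem_nhdsWithin] with t (ht : 0 < t)
  rw [hset t ht]

/-- **Paper Lemma 3.4**: for the univariate scaled problem with information complexity
`n(ε,1) = #{ m ≥ 1 : s₁ λ_m > ε² }` and any `β ≥ 1`, one has
`λ_n ∈ o(ln^{-2β} n)` as `n → ∞` if and only if `ln n(t^β, 1) ∈ o(1/t)` as `t → 0⁺`
(the complexity being finite for every `t > 0`). -/
theorem stmt8 (lam : ℕ → ℝ) (s₁ : ℝ)
    (hnn : ∀ m, 0 ≤ lam m)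
    (hord : ∀ m m' : ℕ, 1 ≤ m → m ≤ m' → lam m' ≤ lam m)
    (hlam2 : 0 < lam 2) (hs : 0 < s₁) (β : ℝ) (hβ : 1 ≤ β) :
    Tendsto (fun m : ℕ => lam m * Real.log m ^ (2 * β)) atTop (nhds 0) ↔
      ((∀ t : ℝ, 0 < t → {m : ℕ | 1 ≤ m ∧ (t ^ β) ^ 2 < s₁ * lam m}.Finite) ∧
        Tendsto (fun t : ℝ =>
            t * Real.log (max (({m : ℕ | 1 ≤ m ∧ (t ^ β) ^ 2 < s₁ * lam m}.ncard : ℝ)) 1))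
          (nhdsWithin 0 (Set.Ioi 0)) (nhds 0)) :=
  stmt8_general lam s₁ hnn hord hs β hβ
end

section
/- Let s ∈ ℕ, let c : {0,1}^s → ℝ, and let ρ₁, …, ρ_s be reals with ρ_k ≥ 2 for every k. Define h : ℝ^s → ℝ by h(z) = Σ_{i∈{0,1}^s} c_i · Π_{k=1}^s z_k^{i_k}, and let Z = Π_{k=1}^s [0, ρ_k]. Then for every σ ∈ {0,1}^s, sup_{z∈Z} |(D^σ h)(z)| ≤ sup_{z∈Z} |h(z)|, where D^σ denotes the partial derivative ∂^{|σ|}/(∂z₁^{σ₁}⋯∂z_s^{σ_s}). -/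
/-
A multilinear `h` is affine in each coordinate, so on the box
`∂_k h(z) = (h(z[z_k := ρ_k]) - h(z[z_k := 0])) / ρ_k`, whence `|∂_k h| ≤ 2 ‖h‖ / ρ_k ≤ ‖h‖`
once `ρ_k ≥ 2`. Since `∂_k h` is again multilinear with the same box, the bound iterates along
the coordinates of `σ`.
-/

/-- An `s`-variate polynomial of degree at most one in each variable, given by its
coefficients `c : {0,1}^s → ℝ`: `h(z) = ∑_i c_i z^i`. -/
noncomputable def polyEval {s : ℕ} (c : (Fin s → Bool) → ℝ) (z : Fin s → ℝ) : ℝ :=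
  ∑ i : Fin s → Bool, c i * ∏ k : Fin s, if i k then z k else 1

/-- Coefficients of the partial derivative `D^σ h` of the multilinear polynomial with
coefficients `c`: `D^σ (∑ c_i z^i) = ∑_{m : m ∧ σ = 0} c_{m ∨ σ} z^m`. -/
def derivCoef {s : ℕ} (c : (Fin s → Bool) → ℝ) (σ : Fin s → Bool) :
    (Fin s → Bool) → ℝ :=
  fun m => if ∀ k, σ k = true → m k = false then c (fun k => m k || σ k) else 0

open Finset Function

namespace MultilinearBox

variable {s : ℕ}

def single (k : Fin s) : Fin s → Bool := fun j => decide (j = k)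

def box (ρ : Fin s → ℝ) : Set (Fin s → ℝ) := {z | ∀ k, z k ∈ Set.Icc 0 (ρ k)}

noncomputable def boxSup (ρ : Fin s → ℝ) (f : (Fin s → ℝ) → ℝ) : ℝ :=
  sSup ((fun z => |f z|) '' box ρ)

def monomial (i : Fin s → Bool) (z : Fin s → ℝ) : ℝ := ∏ k, if i k then z k else 1

lemma polyEval_eq_sum_monomial (c : (Fin s → Bool) → ℝ) (z : Fin s → ℝ) :
    polyEval c z = ∑ i, c i * monomial i z := rfl

lemma continuous_polyEval (c : (Fin s → Bool) → ℝ) : Continuous (polyEval c) := by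
  refine continuous_finsetSum _ fun i _ => continuous_const.mul <|
    continuous_finsetProd _ fun k _ => ?_
  cases i k
  · exact continuous_const
  · exact continuous_apply k

lemma isCompact_box (ρ : Fin s → ℝ) : IsCompact (box ρ) := by
  convert isCompact_univ_pi fun k => isCompact_Icc (a := 0) (b := ρ k)
  ext z
  simp only [box, Set.mem_ofPred_eq, Set.mem_pi, Set.mem_univ, true_implies]

lemma zero_mem_box {ρ : Fin s → ℝ} (hρ : ∀ k, 0 ≤ ρ k) : 0 ∈ box ρ :=
  fun k => ⟨le_rfl, hρ k⟩

lemma update_mem_box {ρ : Fin s → ℝ} {z : Fin s → ℝ} (hz : z ∈ box ρ) (k : Fin s) {t : ℝ}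
    (ht : t ∈ Set.Icc 0 (ρ k)) : update z k t ∈ box ρ := by
  intro j
  rcases eq_or_ne j k with rfl | hjk
  · simpa using ht
  · simpa [update_of_ne hjk] using hz j

lemma abs_le_boxSup {ρ : Fin s → ℝ} {f : (Fin s → ℝ) → ℝ} (hf : Continuous f)
    {z : Fin s → ℝ} (hz : z ∈ box ρ) : |f z| ≤ boxSup ρ f :=
  le_csSup ((isCompact_box ρ).image hf.abs).bddAbove ⟨z, hz, rfl⟩

lemma boxSup_le {ρ : Fin s → ℝ} (hρ : ∀ k, 0 ≤ ρ k) {f : (Fin s → ℝ) → ℝ} {M : ℝ}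
    (h : ∀ z ∈ box ρ, |f z| ≤ M) : boxSup ρ f ≤ M :=
  csSup_le ⟨_, 0, zero_mem_box hρ, rfl⟩ <| by rintro _ ⟨z, hz, rfl⟩; exact h z hz

lemma monomial_update (i : Fin s → Bool) (w : Fin s → ℝ) (k : Fin s) (t : ℝ) :
    monomial i (update w k t) = (if i k then t else 1) * monomial (update i k false) w := by
  classical
  simp only [monomial, Fintype.prod_eq_mul_prod_compl k, update_self, Bool.false_eq_true,
    if_false, one_mul]
  congr 1
  refine prod_congr rfl fun j hj => ?_
  have hjk : j ≠ k := by simpa using hj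
  simp [update_of_ne hjk]

lemma derivCoef_single_apply (c : (Fin s → Bool) → ℝ) (k : Fin s) (m : Fin s → Bool) :
    derivCoef c (single k) m = if m k then 0 else c (update m k true) := by
  have hor : (fun j => m j || single k j) = update m k true := by
    funext j
    rcases eq_or_ne j k with rfl | hjk
    · simp [single]
    · simp [single, hjk]
  simp only [derivCoef, hor]
  cases hmk : m k <;> simp [single, hmk]

lemma polyEval_derivCoef_single (c : (Fin s → Bool) → ℝ) (k : Fin s) (w : Fin s → ℝ) :
    polyEval (derivCoef c (single k)) w =
      ∑ i, if i k then c i * monomial (update i k false) w else 0 := by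
  have hflip : Involutive fun m : Fin s → Bool => update m k (!m k) := fun m => by simp
  refine Fintype.sum_equiv hflip.toPerm _ _ fun m => ?_
  cases hmk : m k
  · have hm : update m k false = m := by rw [← hmk, update_eq_self]
    simp [derivCoef_single_apply, hmk, hm, monomial]
  · simp [derivCoef_single_apply, hmk]

lemma polyEval_update (c : (Fin s → Bool) → ℝ) (k : Fin s) (w : Fin s → ℝ) (t : ℝ) :
    polyEval c (update w k t)
      = polyEval c (update w k 0) + t * polyEval (derivCoef c (single k)) w := by
  rw [polyEval_derivCoef_single]
  simp only [polyEval_eq_sum_monomial, monomial_update, mul_sum, ← sum_add_distrib]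
  refine sum_congr rfl fun i _ => ?_
  split_ifs <;> ring

lemma abs_polyEval_derivCoef_single_le {ρ : Fin s → ℝ} {k : Fin s} (hρk : 2 ≤ ρ k)
    (c : (Fin s → Bool) → ℝ) {z : Fin s → ℝ} (hz : z ∈ box ρ) :
    |polyEval (derivCoef c (single k)) z| ≤ boxSup ρ (polyEval c) := by
  set D := polyEval (derivCoef c (single k)) z
  set M := boxSup ρ (polyEval c)
  have hρD : ρ k * D = polyEval c (update z k (ρ k)) - polyEval c (update z k 0) := by
    rw [polyEval_update c k z (ρ k)]
    ring
  have hρ : |polyEval c (update z k (ρ k))| ≤ M :=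
    abs_le_boxSup (continuous_polyEval c) (update_mem_box hz k ⟨by linarith, le_rfl⟩)
  have h0 : |polyEval c (update z k 0)| ≤ M :=
    abs_le_boxSup (continuous_polyEval c) (update_mem_box hz k ⟨le_rfl, by linarith⟩)
  have hρD_le : ρ k * |D| ≤ 2 * M := by
    rw [← abs_of_nonneg (by linarith : 0 ≤ ρ k), ← abs_mul, hρD]
    linarith [abs_sub (polyEval c (update z k (ρ k))) (polyEval c (update z k 0))]
  nlinarith [abs_nonneg D, (abs_nonneg _).trans h0]

lemma boxSup_derivCoef_single_le {ρ : Fin s → ℝ} (hρ : ∀ k, 2 ≤ ρ k)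
    (c : (Fin s → Bool) → ℝ) (k : Fin s) :
    boxSup ρ (polyEval (derivCoef c (single k))) ≤ boxSup ρ (polyEval c) :=
  boxSup_le (fun j => by linarith [hρ j]) fun _ hz =>
    abs_polyEval_derivCoef_single_le (hρ k) c hz

lemma derivCoef_of_forall_false (c : (Fin s → Bool) → ℝ) {σ : Fin s → Bool}
    (hσ : ∀ k, σ k = false) : derivCoef c σ = c := by
  funext m
  simp [derivCoef, hσ]

lemma derivCoef_derivCoef (c : (Fin s → Bool) → ℝ) {σ τ : Fin s → Bool}
    (hστ : ∀ k, σ k = true → τ k = false) :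
    derivCoef (derivCoef c σ) τ = derivCoef c (fun k => σ k || τ k) := by
  funext m
  have hcond : ((∀ k, τ k = true → m k = false) ∧ ∀ k, σ k = true → (m k || τ k) = false) ↔
      ∀ k, (σ k || τ k) = true → m k = false := by
    refine ⟨fun h k hk => ?_, fun h => ⟨fun k hk => h k (by simp [hk]), fun k hk => ?_⟩⟩
    · rcases Bool.or_eq_true_iff.mp hk with hk | hk
      · exact (Bool.or_eq_false_iff.mp (h.2 k hk)).1
      · exact h.1 k hk
    · simp [h k (by simp [hk]), hστ k hk]
  have hor : (fun k => (m k || τ k) || σ k) = fun k => m k || (σ k || τ k) := by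
    funext k
    cases m k <;> cases σ k <;> cases τ k <;> rfl
  simp only [derivCoef, ← hcond, ite_and, hor]

lemma card_update_false_lt {σ : Fin s → Bool} {k : Fin s} (hk : σ k = true) :
    #{j | update σ k false j = true} < #{j | σ j = true} := by
  have herase : ({j | update σ k false j = true} : Finset (Fin s)) =
      ({j | σ j = true} : Finset (Fin s)).erase k := by
    ext j
    rcases eq_or_ne j k with rfl | hjk <;> simp [*]
  rw [herase]
  exact card_erase_lt_of_mem (by simpa using hk)

theorem boxSup_derivCoef_le {ρ : Fin s → ℝ} (hρ : ∀ k, 2 ≤ ρ k) (c : (Fin s → Bool) → ℝ)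
    (σ : Fin s → Bool) : boxSup ρ (polyEval (derivCoef c σ)) ≤ boxSup ρ (polyEval c) := by
  by_cases h : ∃ k, σ k = true
  · obtain ⟨k, hk⟩ := h
    have hsplit := derivCoef_derivCoef c (σ := update σ k false) (τ := single k) fun j hj => by
      rcases eq_or_ne j k with rfl | hjk
      · simp at hj
      · simp [single, hjk]
    have hσ : (fun j => update σ k false j || single k j) = σ := by
      funext j
      rcases eq_or_ne j k with rfl | hjk
      · simp [single, hk]
      · simp [single, hjk]
    rw [← hσ, ← hsplit]
    exact (boxSup_derivCoef_single_le hρ _ k).trans (boxSup_derivCoef_le hρ c (update σ k false))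
  · rw [derivCoef_of_forall_false c (by simpa using h)]
termination_by #{j | σ j = true}
decreasing_by exact card_update_false_lt hk

end MultilinearBox

/-- **Paper, Step 3 in the proof of Theorem 4.1** (estimate `(4.8)`): if `h` is a real
polynomial of degree at most one in each of `s` variables and
`Z = ∏_k [0, ρ_k]` is a box with all side lengths `ρ_k ≥ 2`, then
`‖D^σ h‖_{L_∞(Z)} ≤ ‖h‖_{L_∞(Z)}` for every `σ ∈ {0,1}^s`. -/
theorem stmt12 (s : ℕ) (c : (Fin s → Bool) → ℝ) (ρ : Fin s → ℝ)
    (hρ : ∀ k, 2 ≤ ρ k) (σ : Fin s → Bool) :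
    sSup ((fun z => |polyEval (derivCoef c σ) z|) ''
        {z : Fin s → ℝ | ∀ k, z k ∈ Set.Icc 0 (ρ k)}) ≤
      sSup ((fun z => |polyEval c z|) '' {z : Fin s → ℝ | ∀ k, z k ∈ Set.Icc 0 (ρ k)}) :=
  MultilinearBox.boxSup_derivCoef_le hρ c σ
end

section
/- Let (μ_m)_{m≥1} be a non-increasing sequence of nonnegative reals with μ₁ > 0, and for s ≥ 1 and k ∈ (ℕ_{≥1})^s set μ_{s,k} = Π_{l=1}^s μ_{k_l}. Then for every V ∈ ℕ₀ and every d ≥ 1, with all sums understood as (possibly infinite) sums of nonnegative terms, Σ_{k∈(ℕ_{≥1})^d, 1 ≤ k₁ ≤ k₂ ≤ … ≤ k_d} μ_{d,k} ≤ μ₁^d · d^V · ( 1 + V + Σ_{L=1}^d μ₁^{−L} · Σ_{j∈(ℕ_{≥1})^L, V+2 ≤ j₁ ≤ j₂ ≤ … ≤ j_L} μ_{L,j} ). -/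
/-!
Let `m` be the number of entries of `k` that are at most `V + 1`. Bounding each of them by `μ₁`
gives `μ_{d,k} ≤ μ₁^m μ_{L,j}`, where `j` is the tail of `k` of length `L = d - m`, all of whose
entries are at least `V + 2`. The tuple `k` is determined by `j` and the counts
`#{l | k_l ≤ v}` for `1 ≤ v ≤ V`. When `L ≥ 1` these counts are `< d`; when `L = 0` they are
determined by their truncations at `d - 1` together with the last entry `k_d ∈ [1, V + 1]`.
So `k ↦ (truncated counts, k_d or j)` is an injection into `[0, d)^V × ([1, V + 1] ⊔ ⊔_L {j})`,
and summing the weights over that set gives the right-hand side.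
-/

open scoped ENNReal
open Finset Function

section CountLE

variable {d : ℕ}

def countLE (k : Fin d → ℕ) (v : ℕ) : ℕ := #{l | k l ≤ v}

lemma countLE_le (k : Fin d → ℕ) (v : ℕ) : countLE k v ≤ d :=
  (card_filter_le _ _).trans_eq (card_fin d)

lemma countLE_mono (k : Fin d → ℕ) : Monotone (countLE k) := fun _ _ h =>
  card_le_card fun l hl => by simp only [mem_filter] at hl ⊢; exact ⟨hl.1, hl.2.trans h⟩

lemma Monotone.le_iff_lt_countLE {k : Fin d → ℕ} (hk : Monotone k) (v : ℕ) (l : Fin d) :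
    k l ≤ v ↔ (l : ℕ) < countLE k v := by
  constructor
  · intro h
    have : Iic l ⊆ ({l | k l ≤ v} : Finset (Fin d)) := fun l' hl' => by
      simp only [mem_filter, mem_univ, true_and]; exact (hk (mem_Iic.1 hl')).trans h
    simpa [countLE] using card_le_card this
  · intro h
    by_contra! hlt
    have : ({l | k l ≤ v} : Finset (Fin d)) ⊆ Iio l := fun l' hl' => by
      simp only [mem_filter, mem_univ, true_and] at hl'
      exact mem_Iio.2 (lt_of_not_ge fun hle => (hlt.trans_le (hk hle)).not_ge hl')
    have := card_le_card this
    simp only [Fin.card_Iio] at this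
    exact (h.trans_le this).false

lemma Monotone.eq_of_countLE_eq {k k' : Fin d → ℕ} (hk : Monotone k) (hk' : Monotone k')
    {S : Set ℕ} (h : ∀ v ∈ S, countLE k v = countLE k' v) {l : Fin d} (hl : k l ∈ S)
    (hl' : k' l ∈ S) : k l = k' l :=
  le_antisymm ((hk.le_iff_lt_countLE _ l).2 (h _ hl' ▸ (hk'.le_iff_lt_countLE _ l).1 le_rfl))
    ((hk'.le_iff_lt_countLE _ l).2 (h _ hl ▸ (hk.le_iff_lt_countLE _ l).1 le_rfl))

lemma Monotone.countLE_eq_iff {n : ℕ} {k : Fin (n + 1) → ℕ} (hk : Monotone k) (v : ℕ) :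
    countLE k v = n + 1 ↔ k (Fin.last n) ≤ v := by
  rw [hk.le_iff_lt_countLE, Fin.val_last]
  have := countLE_le k v
  omega

def dropLE (k : Fin d → ℕ) (v : ℕ) : Fin (d - countLE k v) → ℕ :=
  fun i => k ⟨countLE k v + i, by omega⟩

lemma monotone_dropLE {k : Fin d → ℕ} (hk : Monotone k) (v : ℕ) : Monotone (dropLE k v) :=
  fun _ _ hij => hk (Fin.mk_le_mk.2 (Nat.add_le_add_left hij _))

lemma Monotone.lt_dropLE {k : Fin d → ℕ} (hk : Monotone k) (v : ℕ) (i : Fin (d - countLE k v)) :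
    v < dropLE k v i :=
  lt_of_not_ge fun h => by simpa using (hk.le_iff_lt_countLE v _).1 h

end CountLE

lemma Fin.prod_le_pow_mul_prod_natAdd {M : Type*} [CommMonoid M] [PartialOrder M]
    [IsOrderedMonoid M] {d : ℕ} {f : Fin d → M} {c : M} (hf : ∀ i, f i ≤ c) (m : ℕ) (hm : m ≤ d) :
    ∏ i, f i ≤ c ^ m * ∏ i : Fin (d - m), f ⟨m + i, by omega⟩ := by
  rw [← Fin.prod_congr' f (Nat.add_sub_cancel' hm), Fin.prod_univ_add]
  exact mul_le_mul_left ((prod_le_pow_card _ _ _ fun i _ => hf _).trans_eq (by simp)) _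

lemma ENNReal.pow_mul_inv_pow_of_le {x : ℝ≥0∞} (h0 : x ≠ 0) (htop : x ≠ ⊤) {d L : ℕ}
    (hL : L ≤ d) : x ^ d * x⁻¹ ^ L = x ^ (d - L) := by
  obtain ⟨k, rfl⟩ := Nat.exists_eq_add_of_le hL
  rw [pow_add, mul_right_comm, ← mul_pow, ENNReal.mul_inv_cancel h0 htop, one_pow, one_mul,
    Nat.add_sub_cancel_left]

lemma ENNReal.tsum_prod_snd {α β : Type*} [Fintype α] (f : β → ℝ≥0∞) :
    ∑' p : α × β, f p.2 = Fintype.card α * ∑' b, f b := by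
  rw [ENNReal.tsum_prod', tsum_fintype]
  simp

abbrev MonoTuple (a L : ℕ) := {k : Fin L → ℕ // (∀ i, a ≤ k i) ∧ Monotone k}

noncomputable def tupleWeight (μ : ℕ → ℝ) {L : ℕ} (k : Fin L → ℕ) : ℝ≥0∞ :=
  ∏ i, ENNReal.ofReal (μ (k i))

section Weight

variable {μ : ℕ → ℝ} {d : ℕ}

lemma tupleWeight_le_pow (hord : ∀ m m' : ℕ, 1 ≤ m → m ≤ m' → μ m' ≤ μ m) (x : MonoTuple 1 d) :
    tupleWeight μ x.1 ≤ ENNReal.ofReal (μ 1) ^ d :=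
  (prod_le_pow_card _ _ _ fun l _ => ENNReal.ofReal_le_ofReal (hord 1 _ le_rfl (x.2.1 l))).trans_eq
    (by simp)

lemma tupleWeight_le_pow_mul_tupleWeight_dropLE
    (hord : ∀ m m' : ℕ, 1 ≤ m → m ≤ m' → μ m' ≤ μ m) (x : MonoTuple 1 d) (v : ℕ) :
    tupleWeight μ x.1 ≤
      ENNReal.ofReal (μ 1) ^ countLE x.1 v * tupleWeight μ (dropLE x.1 v) :=
  Fin.prod_le_pow_mul_prod_natAdd (fun l => ENNReal.ofReal_le_ofReal (hord 1 _ le_rfl (x.2.1 l)))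
    _ (countLE_le x.1 v)

end Weight

lemma MonoTuple.apply_eq_of_sigma_mk_eq {c : ℕ} {s : Finset ℕ} {a b : s} {f : MonoTuple c a}
    {g : MonoTuple c b} (h : (⟨a, f⟩ : Σ L : s, MonoTuple c L) = ⟨b, g⟩) (m : ℕ) (ha : m < a)
    (hb : m < b) : f.1 ⟨m, ha⟩ = g.1 ⟨m, hb⟩ := by
  cases h; rfl

lemma MonoTuple.ext_of_countLE_eq {d : ℕ} {x y : MonoTuple 1 d} (V : ℕ)
    (hcnt : ∀ v ∈ Set.Icc 1 (V + 1), countLE x.1 v = countLE y.1 v)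
    (htail : ∀ l : Fin d, countLE x.1 (V + 1) ≤ l → x.1 l = y.1 l) : x = y := by
  refine Subtype.ext (funext fun l => ?_)
  by_cases hl : countLE x.1 (V + 1) ≤ l
  · exact htail l hl
  have hV : V + 1 ∈ Set.Icc 1 (V + 1) := ⟨Nat.le_add_left 1 V, le_rfl⟩
  have hx := (x.2.2.le_iff_lt_countLE _ l).2 (not_le.1 hl)
  have hy := (y.2.2.le_iff_lt_countLE _ l).2 (hcnt _ hV ▸ not_le.1 hl)
  exact x.2.2.eq_of_countLE_eq y.2.2 hcnt ⟨x.2.1 l, hx⟩ ⟨y.2.1 l, hy⟩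

section Encoding

variable {V n : ℕ}

def countCode (V : ℕ) (k : Fin (n + 1) → ℕ) : Fin V → Fin (n + 1) :=
  fun i => ⟨min (countLE k (i + 1)) n, by omega⟩

lemma countLE_eq_of_countCode_eq {k k' : Fin (n + 1) → ℕ} (h : countCode V k = countCode V k')
    {v : ℕ} (hv : v ∈ Set.Icc 1 V) (hfull : countLE k v = n + 1 ↔ countLE k' v = n + 1) :
    countLE k v = countLE k' v := by
  have hi := congrArg Fin.val (congrFun h ⟨v - 1, by grind⟩)
  simp only [countCode, Nat.sub_add_cancel hv.1] at hi
  have := countLE_le k v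
  have := countLE_le k' v
  omega

abbrev Remainder (V d : ℕ) := Fin (V + 1) ⊕ Σ L : Icc 1 d, MonoTuple (V + 2) L

def remainder (V : ℕ) (x : MonoTuple 1 (n + 1)) : Remainder V (n + 1) :=
  if h : countLE x.1 (V + 1) = n + 1 then
    .inl ⟨x.1 (Fin.last n) - 1, by have := (x.2.2.countLE_eq_iff _).1 h; omega⟩
  else
    .inr ⟨⟨n + 1 - countLE x.1 (V + 1), by
      simp only [mem_Icc]; have := countLE_le x.1 (V + 1); omega⟩,
      dropLE x.1 (V + 1), x.2.2.lt_dropLE (V + 1), monotone_dropLE x.2.2 (V + 1)⟩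

noncomputable def remainderWeight (μ : ℕ → ℝ) (d : ℕ) : Remainder V d → ℝ≥0∞
  | .inl _ => ENNReal.ofReal (μ 1) ^ d
  | .inr ⟨L, j⟩ => ENNReal.ofReal (μ 1) ^ (d - L) * tupleWeight μ j.1

lemma tupleWeight_le_remainderWeight {μ : ℕ → ℝ}
    (hord : ∀ m m' : ℕ, 1 ≤ m → m ≤ m' → μ m' ≤ μ m) (x : MonoTuple 1 (n + 1)) :
    tupleWeight μ x.1 ≤ remainderWeight μ (n + 1) (remainder V x) := by
  unfold remainder
  split_ifs
  · exact tupleWeight_le_pow hord x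
  · show _ ≤ _ ^ (n + 1 - (n + 1 - countLE x.1 (V + 1))) * _
    rw [Nat.sub_sub_self (countLE_le x.1 (V + 1))]
    exact tupleWeight_le_pow_mul_tupleWeight_dropLE hord x (V + 1)

lemma injective_countCode_remainder :
    Injective fun x : MonoTuple 1 (n + 1) => (countCode V x.1, remainder V x) := by
  intro x y h
  obtain ⟨hc, hr⟩ := Prod.mk.inj h
  have hmx := countLE_le x.1 (V + 1)
  have hmy := countLE_le y.1 (V + 1)
  unfold remainder at hr
  split_ifs at hr with hx hy
  · have hlast : x.1 (Fin.last n) = y.1 (Fin.last n) := by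
      have := congrArg Fin.val (Sum.inl_injective hr)
      have := x.2.1 (Fin.last n)
      have := y.2.1 (Fin.last n)
      simp only at *
      omega
    refine MonoTuple.ext_of_countLE_eq V (fun v hv => ?_) (fun l hl => by omega)
    rcases hv.2.lt_or_eq with hvV | rfl
    · exact countLE_eq_of_countCode_eq hc ⟨hv.1, by omega⟩
        (by rw [x.2.2.countLE_eq_iff, y.2.2.countLE_eq_iff, hlast])
    · rw [hx, hy]
  · have hsig := Sum.inr_injective hr
    have hm : countLE x.1 (V + 1) = countLE y.1 (V + 1) := by
      have := congrArg (fun s => s.1.1) hsig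
      simp only at this
      omega
    refine MonoTuple.ext_of_countLE_eq V (fun v hv => ?_) (fun l hl => ?_)
    · rcases hv.2.lt_or_eq with hvV | rfl
      · have := countLE_mono x.1 hvV.le
        have := countLE_mono y.1 hvV.le
        exact countLE_eq_of_countCode_eq hc ⟨hv.1, by omega⟩ (by omega)
      · exact hm
    · have := MonoTuple.apply_eq_of_sigma_mk_eq hsig (l - countLE x.1 (V + 1))
        (by dsimp only; omega) (by dsimp only; omega)
      simp only [dropLE] at this
      convert this using 2 <;> ext <;> simp only <;> omega

end Encoding

lemma tsum_remainderWeight (μ : ℕ → ℝ) (V d : ℕ) :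
    ∑' r : Remainder V d, remainderWeight μ d r =
      (V + 1) * ENNReal.ofReal (μ 1) ^ d +
        ∑ L ∈ Icc 1 d,
          ENNReal.ofReal (μ 1) ^ (d - L) * ∑' j : MonoTuple (V + 2) L, tupleWeight μ j.1 := by
  rw [Summable.tsum_sum ENNReal.summable ENNReal.summable, ENNReal.tsum_sigma',
    ← Finset.tsum_subtype]
  simp [remainderWeight, ENNReal.tsum_mul_left]

theorem stmt16_general (μ : ℕ → ℝ)
    (hord : ∀ m m' : ℕ, 1 ≤ m → m ≤ m' → μ m' ≤ μ m)
    (hpos : 0 < μ 1)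
    (V d : ℕ) (hd : 1 ≤ d) :
    (∑' k : {k : Fin d → ℕ // (∀ l, 1 ≤ k l) ∧ Monotone k},
        ∏ l, ENNReal.ofReal (μ (k.1 l))) ≤
      ENNReal.ofReal (μ 1 ^ d * (d : ℝ) ^ V) *
        ((1 + (V : ℝ≥0∞)) +
          ∑ L ∈ Finset.Icc 1 d, (ENNReal.ofReal (μ 1))⁻¹ ^ L *
            ∑' j : {j : Fin L → ℕ // (∀ i, V + 2 ≤ j i) ∧ Monotone j},
              ∏ i, ENNReal.ofReal (μ (j.1 i))) := by
  obtain ⟨n, rfl⟩ : ∃ n, d = n + 1 := ⟨d - 1, by omega⟩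
  set μ₁ := ENNReal.ofReal (μ 1)
  have hμ₁ : μ₁ ≠ 0 := (ENNReal.ofReal_pos.2 hpos).ne'
  calc ∑' x : MonoTuple 1 (n + 1), tupleWeight μ x.1
      ≤ ∑' x : MonoTuple 1 (n + 1), remainderWeight μ (n + 1) (remainder V x) :=
        ENNReal.tsum_le_tsum fun x => tupleWeight_le_remainderWeight hord x
    _ ≤ ∑' p : (Fin V → Fin (n + 1)) × Remainder V (n + 1), remainderWeight μ (n + 1) p.2 :=
        ENNReal.tsum_comp_le_tsum_of_injective injective_countCode_remainder _
    _ = μ₁ ^ (n + 1) * (n + 1 : ℕ) ^ V * ((1 + V) + ∑ L ∈ Icc 1 (n + 1), μ₁⁻¹ ^ L *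
          ∑' j : MonoTuple (V + 2) L, tupleWeight μ j.1) := by
        rw [ENNReal.tsum_prod_snd, tsum_remainderWeight, Fintype.card_fun, Fintype.card_fin,
          Fintype.card_fin, mul_add, mul_add, mul_sum, mul_sum]
        congr 1
        · push_cast; ring
        · refine sum_congr rfl fun L hL => ?_
          rw [← ENNReal.pow_mul_inv_pow_of_le hμ₁ ENNReal.ofReal_ne_top (mem_Icc.1 hL).2]
          push_cast; ring
    _ = _ := by
        rw [ENNReal.ofReal_mul (by positivity), ENNReal.ofReal_pow hpos.le,
          ENNReal.ofReal_pow (by positivity), ENNReal.ofReal_natCast]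
        rfl

/-- **Paper Lemma 5.4**: for a non-increasing sequence `μ` of nonnegative reals with
`μ₁ > 0` and products `μ_{s,k} = ∏_l μ_{k_l}`, one has for every `V ∈ ℕ₀` and `d ≥ 1`
(all sums in `[0,∞]`):
`∑_{1 ≤ k₁ ≤ … ≤ k_d} μ_{d,k}
  ≤ μ₁^d d^V (1 + V + ∑_{L=1}^d μ₁^{-L} ∑_{V+2 ≤ j₁ ≤ … ≤ j_L} μ_{L,j})`. -/
theorem stmt16 (μ : ℕ → ℝ)
    (hnn : ∀ m, 0 ≤ μ m)
    (hord : ∀ m m' : ℕ, 1 ≤ m → m ≤ m' → μ m' ≤ μ m)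
    (hpos : 0 < μ 1)
    (V d : ℕ) (hd : 1 ≤ d) :
    (∑' k : {k : Fin d → ℕ // (∀ l, 1 ≤ k l) ∧ Monotone k},
        ∏ l, ENNReal.ofReal (μ (k.1 l))) ≤
      ENNReal.ofReal (μ 1 ^ d * (d : ℝ) ^ V) *
        ((1 + (V : ℝ≥0∞)) +
          ∑ L ∈ Finset.Icc 1 d, (ENNReal.ofReal (μ 1))⁻¹ ^ L *
            ∑' j : {j : Fin L → ℕ // (∀ i, V + 2 ≤ j i) ∧ Monotone j},
              ∏ i, ENNReal.ofReal (μ (j.1 i))) :=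
  stmt16_general μ hord hpos V d hd
end

section
/- Let λ = (λ_m)_{m≥1} be a non-increasing sequence of nonnegative reals with λ₂ > 0. For each d ≥ 2 fix a nonempty subset I_d = {i₁ < … < i_{#I_d}} ⊆ {1,…,d} and let ∇_d = { k ∈ (ℕ_{≥1})^d : k_{i₁} < k_{i₂} < … < k_{i_{#I_d}} }, with ∇₁ = ℕ_{≥1}; define n(ε,d) = #{ k ∈ ∇_d : Π_{l=1}^d λ_{k_l} > ε² } and consider the absolute error criterion. If λ₁ < 1, then the following are equivalent: (i) the antisymmetric problem is strongly polynomially tractable (∃ C,p>0 ∀d≥1 ∀ε∈(0,1]: n(ε,d) ≤ C·ε^{−p}); (ii) it is polynomially tractable (∃ C,p>0, q≥0 ∀d,ε∈(0,1]: n(ε,d) ≤ C·ε^{−p}·d^q); (iii) there exists τ ∈ (0,∞) with Σ_{m=1}^∞ λ_m^τ < ∞. Moreover, the same three assertions are equivalent if λ₁ ≥ 1 and the number of antisymmetric coordinates grows linearly with the dimension, i.e. there exists c > 0 with #I_d ≥ c·d for all d. -/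
open scoped ENNReal

/-- The index set `∇_d` for the `I_d`-antisymmetric problem: multi-indices
`k ∈ (ℕ_{≥1})^d` strictly increasing along the ordered coordinates of `I d`. -/
def nablaAsy (I : (d : ℕ) → Finset (Fin d)) (d : ℕ) : Set (Fin d → ℕ) :=
  {k | (∀ l, 1 ≤ k l) ∧ ∀ a ∈ I d, ∀ b ∈ I d, a < b → k a < k b}

/-- The information complexity (absolute error criterion) of the `I_d`-antisymmetric
problem: `n(ε,d) = #{k ∈ ∇_d : ∏_l λ_{k_l} > ε²}`. -/
noncomputable def nAsy (lam : ℕ → ℝ) (I : (d : ℕ) → Finset (Fin d)) (ε : ℝ) (d : ℕ) :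
    ℕ∞ :=
  ({k | k ∈ nablaAsy I d ∧ ε ^ 2 < ∏ l, lam (k l)} : Set (Fin d → ℕ)).encard

/-- Strong polynomial tractability of the antisymmetric problem. -/
def SPTAsy (lam : ℕ → ℝ) (I : (d : ℕ) → Finset (Fin d)) : Prop :=
  ∃ C > (0 : ℝ), ∃ p > (0 : ℝ), ∀ d : ℕ, 1 ≤ d → ∀ ε : ℝ, 0 < ε → ε ≤ 1 →
    (nAsy lam I ε d : ℝ≥0∞) ≤ ENNReal.ofReal (C * ε ^ (-p))

/-- Polynomial tractability of the antisymmetric problem. -/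
def PTAsy (lam : ℕ → ℝ) (I : (d : ℕ) → Finset (Fin d)) : Prop :=
  ∃ C > (0 : ℝ), ∃ p > (0 : ℝ), ∃ q : ℝ, 0 ≤ q ∧
    ∀ d : ℕ, 1 ≤ d → ∀ ε : ℝ, 0 < ε → ε ≤ 1 →
      (nAsy lam I ε d : ℝ≥0∞) ≤ ENNReal.ofReal (C * ε ^ (-p) * (d : ℝ) ^ q)

/-!
A Markov bound gives `n(ε,d) ε^{2τ} ≤ ∑_{k ∈ ∇_d, λ_k > ε²} ∏_l λ_{k_l}^τ`, and permuting the
`I_d`-coordinates of the elements of `∇_d` is injective, so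
`n(ε,d) ε^{2τ} (#I_d)! ≤ (∑_m λ_m^τ)^d`. If `λ₁ < 1`, enlarging `τ` makes `∑_m λ_m^τ ≤ 1`; if
`#I_d ≥ c d`, then `s = ∑_m λ_m^τ` satisfies `s^d ≤ t^{#I_d} ≤ e^t (#I_d)!` with
`t = max(s,1)^{1/c}`. Either way summability of `λ^τ` gives strong polynomial tractability.
Conversely, already for `d = 1` polynomial tractability says `n ≤ C ε^{-p}` whenever
`λ_n > ε²`, so `λ_n^p = O(n^{-2})`.
-/

open Function Finset Equiv
open scoped Nat

theorem ENNReal.tsum_fin_pi_prod {α : Type*} (g : α → ℝ≥0∞) :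
    ∀ d : ℕ, ∑' k : Fin d → α, ∏ l, g (k l) = (∑' a, g a) ^ d
  | 0 => by simp
  | d + 1 => by
    rw [← (Fin.consEquiv fun _ => α).tsum_eq, ENNReal.tsum_prod', pow_succ',
      ← ENNReal.tsum_fin_pi_prod g d, ← ENNReal.tsum_mul_right]
    refine tsum_congr fun a => ?_
    rw [← ENNReal.tsum_mul_left]
    simp [Fin.consEquiv, Fin.prod_univ_succ]

theorem comp_ofSubtype_injective {ι α : Type*} [LinearOrder ι] [LinearOrder α] (s : Finset ι) :
    Injective fun p : Perm s × {k : ι → α // StrictMonoOn k s} => p.2.1 ∘ Perm.ofSubtype p.1 := by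
  rintro ⟨σ, k, hk⟩ ⟨σ', k', hk'⟩ h
  simp only at h
  have hu : StrictMono fun x : s => k x := fun a b hab => hk a.2 b.2 hab
  have hu' : StrictMono fun x : s => k' x := fun a b hab => hk' a.2 b.2 hab
  have hcomp : (fun x : s => k x) ∘ σ = (fun x : s => k' x) ∘ σ' := funext fun x => by
    simpa [Perm.ofSubtype_apply_coe] using congrFun h x
  have hrange : Set.range (fun x : s => k x) = Set.range fun x : s => k' x := by
    rw [← σ.surjective.range_comp, hcomp, σ'.surjective.range_comp]
  have hon : (fun x : s => k x) = fun x : s => k' x := (hu.range_inj hu').mp hrange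
  obtain rfl : k = k' := funext fun l => by
    by_cases hl : l ∈ s
    · exact congrFun hon ⟨l, hl⟩
    · simpa [Perm.ofSubtype_apply_of_not_mem _ hl] using congrFun h l
  exact Prod.ext (Equiv.ext fun x => hu.injective (congrFun hcomp x)) rfl

theorem factorial_card_mul_tsum_le {ι α : Type*} [Fintype ι] [LinearOrder ι] [LinearOrder α]
    (s : Finset ι) (g : α → ℝ≥0∞) {A : Set (ι → α)} (hA : ∀ k ∈ A, StrictMonoOn k s) :
    (#s)! * ∑' k : A, ∏ i, g (k.1 i) ≤ ∑' k : ι → α, ∏ i, g (k i) := by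
  let Φ : Perm s × A → ι → α := fun p => p.2.1 ∘ Perm.ofSubtype p.1
  have hΦ : Injective Φ := (comp_ofSubtype_injective s).comp
    (injective_id.prodMap fun k k' h => Subtype.ext (congrArg Subtype.val h :) :
      Injective (Prod.map id fun k : A => (⟨k, hA k k.2⟩ : {k : ι → α // StrictMonoOn k s})))
  calc (#s)! * ∑' k : A, ∏ i, g (k.1 i) = ∑' p : Perm s × A, ∏ i, g (Φ p i) := by
        have hinv (σ : Perm s) (k : A) : ∏ i, g (Φ (σ, k) i) = ∏ i, g (k.1 i) :=
          Equiv.prod_comp (Perm.ofSubtype σ) fun i => g (k.1 i)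
        simp only [ENNReal.tsum_prod', hinv, ENNReal.tsum_const, ENat.card_eq_coe_fintype_card,
          Fintype.card_perm, Fintype.card_coe]
        norm_cast
    _ ≤ ∑' k : ι → α, ∏ i, g (k i) := ENNReal.tsum_comp_le_tsum_of_injective hΦ _

theorem ENNReal.encard_mul_le_tsum {β : Type*} {A : Set β} {c : ℝ≥0∞} {F : β → ℝ≥0∞}
    (h : ∀ k ∈ A, c ≤ F k) : A.encard * c ≤ ∑' k : A, F k := by
  rw [← ENNReal.tsum_set_const]
  exact ENNReal.tsum_le_tsum fun k => h k k.2

section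

variable {lam : ℕ → ℝ} {I : (d : ℕ) → Finset (Fin d)}

theorem nAsy_mul_le (hnn : ∀ m, 0 ≤ lam m) {τ ε : ℝ} (hτ : 0 ≤ τ) (hε : 0 ≤ ε) (d : ℕ) :
    (nAsy lam I ε d : ℝ≥0∞) * ENNReal.ofReal (ε ^ (2 * τ)) * (#(I d))! ≤
      (∑' m : ℕ, ENNReal.ofReal (lam (m + 1) ^ τ)) ^ d := by
  -- indices of `∇_d` are `≥ 1`, so the weight of `0` is set to `0`, not to the junk `λ₀ ^ τ`
  let g : ℕ → ℝ≥0∞ := fun m => if m = 0 then 0 else ENNReal.ofReal (lam m ^ τ)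
  have hg : ∑' m, g m = ∑' m : ℕ, ENNReal.ofReal (lam (m + 1) ^ τ) := by
    rw [tsum_eq_zero_add' ENNReal.summable]
    simp [g]
  have hmarkov : ∀ k ∈ {k | k ∈ nablaAsy I d ∧ ε ^ 2 < ∏ l, lam (k l)},
      ENNReal.ofReal (ε ^ (2 * τ)) ≤ ∏ l, g (k l) := by
    rintro k ⟨⟨hpos, -⟩, hk⟩
    have hprod : ∏ l, g (k l) = ENNReal.ofReal ((∏ l, lam (k l)) ^ τ) := by
      rw [← Real.finsetProd_rpow _ _ fun l _ => hnn _,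
        ENNReal.ofReal_prod_of_nonneg fun l _ => Real.rpow_nonneg (hnn _) τ]
      exact prod_congr rfl fun l _ => if_neg (Nat.one_le_iff_ne_zero.mp (hpos l))
    rw [hprod, Real.rpow_mul hε, Real.rpow_two]
    exact ENNReal.ofReal_le_ofReal (Real.rpow_le_rpow (by positivity) hk.le hτ)
  calc (nAsy lam I ε d : ℝ≥0∞) * ENNReal.ofReal (ε ^ (2 * τ)) * (#(I d))!
      ≤ (#(I d))! * ∑' k : {k | k ∈ nablaAsy I d ∧ ε ^ 2 < ∏ l, lam (k l)}, ∏ l, g (k.1 l) := by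
        rw [mul_comm]
        gcongr
        exact ENNReal.encard_mul_le_tsum hmarkov
    _ ≤ ∑' k : Fin d → ℕ, ∏ l, g (k l) := factorial_card_mul_tsum_le _ _ fun k hk => hk.1.2
    _ = (∑' m : ℕ, ENNReal.ofReal (lam (m + 1) ^ τ)) ^ d := by
        rw [ENNReal.tsum_fin_pi_prod, hg]

theorem SPTAsy.of_tsum_pow_le (hnn : ∀ m, 0 ≤ lam m) {τ : ℝ} (hτ : 0 < τ)
    (hsum : Summable fun m : ℕ => lam (m + 1) ^ τ) {C : ℝ} (hC : 0 < C)
    (hbd : ∀ d : ℕ, 1 ≤ d → (∑' m : ℕ, lam (m + 1) ^ τ) ^ d ≤ C * (#(I d))!) :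
    SPTAsy lam I := by
  refine ⟨C, hC, 2 * τ, by positivity, fun d hd ε hε _ => ?_⟩
  have hS : ∑' m : ℕ, ENNReal.ofReal (lam (m + 1) ^ τ) =
      ENNReal.ofReal (∑' m : ℕ, lam (m + 1) ^ τ) :=
    (ENNReal.ofReal_tsum_of_nonneg (fun _ => Real.rpow_nonneg (hnn _) τ) hsum).symm
  have hε' : 0 < ε ^ (2 * τ) := by positivity
  refine (ENNReal.mul_le_mul_iff_left (c := ENNReal.ofReal (ε ^ (2 * τ)) * (#(I d))!)
    (by positivity) (by finiteness)).mp ?_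
  calc (nAsy lam I ε d : ℝ≥0∞) * (ENNReal.ofReal (ε ^ (2 * τ)) * (#(I d))!)
      ≤ (∑' m : ℕ, ENNReal.ofReal (lam (m + 1) ^ τ)) ^ d := by
        rw [← mul_assoc]; exact nAsy_mul_le hnn hτ.le hε.le d
    _ = ENNReal.ofReal ((∑' m : ℕ, lam (m + 1) ^ τ) ^ d) := by
        rw [hS, ENNReal.ofReal_pow (tsum_nonneg fun _ => Real.rpow_nonneg (hnn _) τ)]
    _ ≤ ENNReal.ofReal (C * (#(I d))!) := ENNReal.ofReal_le_ofReal (hbd d hd)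
    _ = ENNReal.ofReal (C * ε ^ (-(2 * τ))) * (ENNReal.ofReal (ε ^ (2 * τ)) * (#(I d))!) := by
        rw [← ENNReal.ofReal_natCast, ← ENNReal.ofReal_mul hε'.le,
          ← ENNReal.ofReal_mul (by positivity), Real.rpow_neg hε.le]
        congr 1
        field_simp

theorem exists_tsum_rpow_le_one (hnn : ∀ m, 0 ≤ lam m)
    (hord : ∀ m m' : ℕ, 1 ≤ m → m ≤ m' → lam m' ≤ lam m) (h1 : lam 1 < 1) {τ₀ : ℝ} (hτ₀ : 0 < τ₀)
    (hsum₀ : Summable fun m : ℕ => lam (m + 1) ^ τ₀) :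
    ∃ τ : ℝ, 0 < τ ∧ Summable (fun m : ℕ => lam (m + 1) ^ τ) ∧ ∑' m : ℕ, lam (m + 1) ^ τ ≤ 1 := by
  set s₀ := ∑' m : ℕ, lam (m + 1) ^ τ₀
  have hs₀ : 0 ≤ s₀ := tsum_nonneg fun m => Real.rpow_nonneg (hnn _) τ₀
  obtain ⟨n, hn⟩ := exists_pow_lt_of_lt_one (inv_pos.mpr (by linarith : 0 < s₀ + 1)) h1
  have hle (m : ℕ) : lam (m + 1) ^ (τ₀ + n) ≤ lam 1 ^ n * lam (m + 1) ^ τ₀ := by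
    rw [Real.rpow_add_natCast' (hnn _) (by positivity), mul_comm]
    exact mul_le_mul_of_nonneg_right
      (pow_le_pow_left₀ (hnn _) (hord 1 (m + 1) le_rfl (by omega)) n) (Real.rpow_nonneg (hnn _) _)
  have hsum : Summable fun m : ℕ => lam (m + 1) ^ (τ₀ + n) :=
    .of_nonneg_of_le (fun m => Real.rpow_nonneg (hnn _) _) hle (hsum₀.mul_left _)
  refine ⟨τ₀ + n, by positivity, hsum, ?_⟩
  calc ∑' m : ℕ, lam (m + 1) ^ (τ₀ + n) ≤ lam 1 ^ n * s₀ := by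
        rw [← tsum_mul_left]; exact hsum.tsum_le_tsum hle (hsum₀.mul_left _)
    _ ≤ (s₀ + 1)⁻¹ * (s₀ + 1) := by gcongr; linarith
    _ = 1 := inv_mul_cancel₀ (by linarith)

theorem SPTAsy.of_lt_one (hnn : ∀ m, 0 ≤ lam m)
    (hord : ∀ m m' : ℕ, 1 ≤ m → m ≤ m' → lam m' ≤ lam m) (h1 : lam 1 < 1) {τ₀ : ℝ} (hτ₀ : 0 < τ₀)
    (hsum₀ : Summable fun m : ℕ => lam (m + 1) ^ τ₀) : SPTAsy lam I := by
  obtain ⟨τ, hτ, hsum, hle⟩ := exists_tsum_rpow_le_one hnn hord h1 hτ₀ hsum₀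
  refine .of_tsum_pow_le hnn hτ hsum one_pos fun d _ => ?_
  calc (∑' m : ℕ, lam (m + 1) ^ τ) ^ d ≤ 1 :=
        pow_le_one₀ (tsum_nonneg fun m => Real.rpow_nonneg (hnn _) τ) hle
    _ ≤ 1 * (#(I d))! := by rw [one_mul]; exact_mod_cast (#(I d)).factorial_pos

theorem pow_le_exp_mul_factorial {s c : ℝ} (hs : 0 ≤ s) (hc : 0 < c) {d m : ℕ}
    (hm : c * d ≤ m) : s ^ d ≤ Real.exp (max s 1 ^ c⁻¹) * m ! := by
  have ht : 0 ≤ max s 1 ^ c⁻¹ := by positivity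
  calc s ^ d ≤ max s 1 ^ (d : ℝ) := by
        rw [Real.rpow_natCast]; exact pow_le_pow_left₀ hs (le_max_left s 1) d
    _ ≤ max s 1 ^ (c⁻¹ * m) := by
        gcongr
        · exact le_max_right s 1
        · rwa [le_inv_mul_iff₀ hc]
    _ = (max s 1 ^ c⁻¹) ^ m := Real.rpow_mul_natCast (by positivity) _ _
    _ ≤ Real.exp (max s 1 ^ c⁻¹) * m ! :=
        (div_le_iff₀ (by positivity)).mp (Real.pow_div_factorial_le_exp _ ht m)

theorem SPTAsy.of_card_ge (hnn : ∀ m, 0 ≤ lam m) {c : ℝ} (hc : 0 < c)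
    (hcard : ∀ d : ℕ, 1 ≤ d → c * d ≤ (#(I d) : ℝ)) {τ : ℝ} (hτ : 0 < τ)
    (hsum : Summable fun m : ℕ => lam (m + 1) ^ τ) : SPTAsy lam I :=
  .of_tsum_pow_le hnn hτ hsum (Real.exp_pos _) fun d hd =>
    pow_le_exp_mul_factorial (tsum_nonneg fun _ => Real.rpow_nonneg (hnn _) τ) hc (hcard d hd)

theorem SPTAsy.ptAsy (h : SPTAsy lam I) : PTAsy lam I := by
  obtain ⟨C, hC, p, hp, hb⟩ := h
  exact ⟨C, hC, p, hp, 0, le_rfl, fun d hd ε hε hε1 => by simpa using hb d hd ε hε hε1⟩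

theorem le_nAsy_one (hord : ∀ m m' : ℕ, 1 ≤ m → m ≤ m' → lam m' ≤ lam m) {n : ℕ} {ε : ℝ}
    (h : ε ^ 2 < lam n) : (n : ℕ∞) ≤ nAsy lam I ε 1 := by
  have hinj : Injective fun m : ℕ => fun _ : Fin 1 => m := fun a b hab => congrFun hab 0
  have hsub : (fun m : ℕ => fun _ : Fin 1 => m) '' Set.Icc 1 n ⊆
      {k | k ∈ nablaAsy I 1 ∧ ε ^ 2 < ∏ l, lam (k l)} := by
    rintro _ ⟨m, ⟨hm1, hmn⟩, rfl⟩
    refine ⟨⟨fun _ => hm1, fun a _ b _ hab => absurd (Subsingleton.elim a b) hab.ne⟩, ?_⟩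
    simpa using h.trans_le (hord m n hm1 hmn)
  calc (n : ℕ∞) = (Set.Icc 1 n).encard := by
        rw [← Finset.coe_Icc, Set.encard_coe_eq_coe_finsetCard, Nat.card_Icc, Nat.add_sub_cancel]
    _ = ((fun m : ℕ => fun _ : Fin 1 => m) '' Set.Icc 1 n).encard := (hinj.encard_image _).symm
    _ ≤ nAsy lam I ε 1 := Set.encard_mono hsub

theorem rpow_le_of_forall_sq_lt {x C p n : ℝ} (hx : 0 ≤ x) (hC : 0 < C) (hp : 0 < p) (hn : C < n)
    (h : ∀ ε : ℝ, 0 < ε → ε ≤ 1 → ε ^ 2 < x → n ≤ C * ε ^ (-p)) :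
    x ^ p ≤ 2 ^ p * (C / n) ^ 2 := by
  rcases hx.eq_or_lt with rfl | hx
  · rw [Real.zero_rpow hp.ne']; positivity
  have hx1 : x ≤ 1 := by
    by_contra! hx1
    have := h 1 one_pos le_rfl (by simpa using hx1)
    rw [Real.one_rpow, mul_one] at this
    linarith
  set ε := Real.sqrt (x / 2)
  have hε : 0 < ε := Real.sqrt_pos.mpr (by positivity)
  have hε2 : ε ^ 2 = x / 2 := Real.sq_sqrt (by positivity)
  have hεp : ε ^ p ≤ C / n := by
    have := h ε hε (Real.sqrt_le_one.mpr (by linarith)) (by linarith)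
    rw [Real.rpow_neg hε.le, ← div_eq_mul_inv, le_div_iff₀ (by positivity)] at this
    rwa [le_div_iff₀ (by linarith), mul_comm]
  have hsq : (ε ^ p) ^ 2 = (x / 2) ^ p := by
    rw [← Real.rpow_mul_natCast hε.le, ← hε2, ← Real.rpow_natCast_mul hε.le, mul_comm]
  calc x ^ p = 2 ^ p * (ε ^ p) ^ 2 := by
        rw [hsq, ← Real.mul_rpow (by norm_num) (by positivity)]
        ring_nf
    _ ≤ 2 ^ p * (C / n) ^ 2 := by gcongr

theorem PTAsy.exists_summable_rpow (hnn : ∀ m, 0 ≤ lam m)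
    (hord : ∀ m m' : ℕ, 1 ≤ m → m ≤ m' → lam m' ≤ lam m) (h : PTAsy lam I) :
    ∃ τ : ℝ, 0 < τ ∧ Summable (fun m : ℕ => lam (m + 1) ^ τ) := by
  obtain ⟨C, hC, p, hp, q, -, hb⟩ := h
  have hcount (n : ℕ) (ε : ℝ) (hε : 0 < ε) (hε1 : ε ≤ 1) (hlt : ε ^ 2 < lam n) :
      (n : ℝ) ≤ C * ε ^ (-p) := by
    have := (ENat.toENNReal_le.mpr (le_nAsy_one hord hlt)).trans (hb 1 le_rfl ε hε hε1)
    rw [Nat.cast_one, Real.one_rpow, mul_one, ENat.toENNReal_coe, ← ENNReal.ofReal_natCast] at this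
    exact (ENNReal.ofReal_le_ofReal_iff (by positivity)).mp this
  refine ⟨p, hp, .of_norm_bounded_eventually_nat
    ((Real.summable_nat_pow_inv.mpr one_lt_two).mul_left (2 ^ p * C ^ 2)) ?_⟩
  filter_upwards [Filter.eventually_gt_atTop ⌈C⌉₊] with m hm
  have hCm : C < m := (Nat.le_ceil C).trans_lt (by exact_mod_cast hm)
  have hm0 : (0 : ℝ) < m := hC.trans hCm
  rw [Real.norm_of_nonneg (Real.rpow_nonneg (hnn _) p)]
  calc lam (m + 1) ^ p ≤ 2 ^ p * (C / (m + 1 : ℕ)) ^ 2 :=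
        rpow_le_of_forall_sq_lt (hnn _) hC hp (by push_cast; linarith) (hcount (m + 1))
    _ ≤ 2 ^ p * (C / m) ^ 2 := by gcongr; linarith
    _ = 2 ^ p * C ^ 2 * ((m : ℝ) ^ 2)⁻¹ := by ring

theorem tractability_equivalences (hnn : ∀ m, 0 ≤ lam m)
    (hord : ∀ m m' : ℕ, 1 ≤ m → m ≤ m' → lam m' ≤ lam m)
    (h : (∃ τ : ℝ, 0 < τ ∧ Summable (fun m : ℕ => lam (m + 1) ^ τ)) → SPTAsy lam I) :
    (SPTAsy lam I ↔ PTAsy lam I) ∧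
      (PTAsy lam I ↔ ∃ τ : ℝ, 0 < τ ∧ Summable (fun m : ℕ => lam (m + 1) ^ τ)) :=
  ⟨⟨SPTAsy.ptAsy, fun hPT => h (hPT.exists_summable_rpow hnn hord)⟩,
    ⟨fun hPT => hPT.exists_summable_rpow hnn hord, fun hτ => (h hτ).ptAsy⟩⟩

end

theorem stmt19_general (lam : ℕ → ℝ)
    (hnn : ∀ m, 0 ≤ lam m)
    (hord : ∀ m m' : ℕ, 1 ≤ m → m ≤ m' → lam m' ≤ lam m)
    (I : (d : ℕ) → Finset (Fin d)) :
    (lam 1 < 1 →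
      (SPTAsy lam I ↔ PTAsy lam I) ∧
      (PTAsy lam I ↔ ∃ τ : ℝ, 0 < τ ∧ Summable (fun m : ℕ => lam (m + 1) ^ τ))) ∧
    ((1 ≤ lam 1 ∧ ∃ c > (0 : ℝ), ∀ d : ℕ, 1 ≤ d → c * d ≤ ((I d).card : ℝ)) →
      (SPTAsy lam I ↔ PTAsy lam I) ∧
      (PTAsy lam I ↔ ∃ τ : ℝ, 0 < τ ∧ Summable (fun m : ℕ => lam (m + 1) ^ τ))) := by
  refine ⟨fun h1 => ?_, fun ⟨_, c, hc, hcard⟩ => ?_⟩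
  · exact tractability_equivalences hnn hord fun ⟨τ, hτ, hsum⟩ => .of_lt_one hnn hord h1 hτ hsum
  · exact tractability_equivalences hnn hord fun ⟨τ, hτ, hsum⟩ => .of_card_ge hnn hc hcard hτ hsum

/-- **Paper Theorem 5.12** (tractability of antisymmetric tensor product problems,
absolute error criterion): if `λ₁ < 1`, then strong polynomial tractability,
polynomial tractability, and `λ ∈ ℓ_τ` for some `τ > 0` are equivalent; the same three
assertions are equivalent if `λ₁ ≥ 1` and the number `#I_d` of antisymmetric
coordinates grows linearly with `d`. -/
theorem stmt19 (lam : ℕ → ℝ)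
    (hnn : ∀ m, 0 ≤ lam m)
    (hord : ∀ m m' : ℕ, 1 ≤ m → m ≤ m' → lam m' ≤ lam m)
    (hlam2 : 0 < lam 2)
    (I : (d : ℕ) → Finset (Fin d)) (hI : ∀ d, 2 ≤ d → (I d).Nonempty) :
    (lam 1 < 1 →
      (SPTAsy lam I ↔ PTAsy lam I) ∧
      (PTAsy lam I ↔ ∃ τ : ℝ, 0 < τ ∧ Summable (fun m : ℕ => lam (m + 1) ^ τ))) ∧
    ((1 ≤ lam 1 ∧ ∃ c > (0 : ℝ), ∀ d : ℕ, 1 ≤ d → c * d ≤ ((I d).card : ℝ)) →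
      (SPTAsy lam I ↔ PTAsy lam I) ∧
      (PTAsy lam I ↔ ∃ τ : ℝ, 0 < τ ∧ Summable (fun m : ℕ => lam (m + 1) ^ τ))) :=
  stmt19_general lam hnn hord I
end
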